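/- arXiv:2211.12669 — 6 statements merged into one kernel-verified Lean document; each statement's English description precedes it below -/
import Mathlib

section
/- Let P be a probability measure on Θ² = [0,1]×[0,1] and let 𝒬 be a set of probability measures on Θ², each absolutely continuous with respect to P, that is rearrangement invariant. Let t^X and t^Y be bounded measurable transfer functions Θ² → ℝ₊² whose total transfers T^X(θ,θ') := t^X₁(θ,θ')+t^X₂(θ',θ) and T^Y(θ,θ') := t^Y₁(θ,θ')+t^Y₂(θ',θ) are each nondecreasing in each argument with P{T^X = c} = P{T^Y = c} = 0 for every c ≥ 0. Assume: (NWSCC) for each i ∈ {1,2} and each θ ∈ Θ there exists θ̂ ∈ [0,1] such that t^X_i(θ,θ') ≤ t^Y_i(θ,θ') whenever θ' < θ̂ and t^X_i(θ,θ') ≥ t^Y_i(θ,θ') whenever θ' > θ̂; (RRC) for each i ∈ {1,2} and for almost every θ (with respect to the marginal of P on bidder i's coordinate), ∫_Θ t^X_i(θ,θ') P(dθ'|θ) ≥ ∫_Θ t^Y_i(θ,θ') P(dθ'|θ), where P(·|θ) is the disintegration of the competitor's coordinate of P given bidder i's coordinate θ. Then the best-case revenues satisfy sup_{Q ∈ 𝒬}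 ∬_{Θ²} T^X dQ ≥ sup_{Q ∈ 𝒬} ∬_{Θ²} T^Y dQ. -/
open MeasureTheory ProbabilityTheory
open scoped ProbabilityTheory ENNReal

noncomputable section

abbrev Θ : Type := ↥(Set.Icc (0:ℝ) 1)

/-- `ν'` is a rearrangement of `ν` with respect to `μ`. -/
def IsRearrangement {Ω : Type*} [MeasurableSpace Ω] (μ ν ν' : Measure Ω) : Prop :=
  ∀ c : ENNReal, μ {ω | ν'.rnDeriv μ ω ≤ c} = μ {ω | ν.rnDeriv μ ω ≤ c}

namespace Stmt11Aux

open Set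

lemma frac_mono {n N : ℕ} (h : n ≤ N) : (1:ℝ)/(N+1) ≤ 1/(n+1) := by
  apply one_div_le_one_div_of_le (by positivity)
  have : (n:ℝ) ≤ N := by exact_mod_cast h
  linarith

lemma empty_top {α : Type*} {T : α → ℝ} {B : ℝ} (hB : ∀ x, T x ≤ B) :
    {x | max B 0 < T x} = (∅ : Set α) := by
  ext x; simp only [Set.mem_setOf_eq, Set.mem_empty_iff_false, iff_false, not_lt]
  exact le_trans (hB x) (le_max_left _ _)

variable {α : Type*} [MeasurableSpace α]

/-- upper quantile: smallest `c ≥ -1` such that `P {T > c} ≤ m`. -/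
def quant (P : Measure α) (T : α → ℝ) (m : ℝ≥0∞) : ℝ :=
  sInf {c : ℝ | -1 ≤ c ∧ P {x | c < T x} ≤ m}

lemma quant_anti (P : Measure α) (T : α → ℝ) {B : ℝ} (hB : ∀ x, T x ≤ B)
    {m m' : ℝ≥0∞} (h : m ≤ m') : quant P T m' ≤ quant P T m := by
  apply csInf_le_csInf
  · exact ⟨-1, fun c hc => hc.1⟩
  · refine ⟨max B 0, le_trans (by norm_num) (le_max_right _ _), ?_⟩
    rw [empty_top hB, measure_empty]; exact zero_le
  · exact fun c hc => ⟨hc.1, hc.2.trans h⟩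

lemma quant_spec (P : Measure α) [IsProbabilityMeasure P] {T : α → ℝ}
    (hTm : Measurable T) (hT0 : ∀ x, 0 ≤ T x) {B : ℝ} (hB : ∀ x, T x ≤ B)
    (hatom : ∀ c : ℝ, P {x | T x = c} = 0) {m : ℝ≥0∞} (hm : m ≤ 1) :
    P {x | quant P T m < T x} = m := by
  set S : Set ℝ := {c : ℝ | -1 ≤ c ∧ P {x | c < T x} ≤ m} with hS
  have hSne : (max B 0) ∈ S := by
    refine ⟨le_trans (by norm_num) (le_max_right _ _), ?_⟩
    rw [empty_top hB, measure_empty]; exact zero_le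
  have hSbdd : BddBelow S := ⟨-1, fun c hc => hc.1⟩
  set q : ℝ := quant P T m with hq
  -- every c > q satisfies P {T > c} ≤ m
  have hgt : ∀ c : ℝ, q < c → P {x | c < T x} ≤ m := by
    intro c hc
    obtain ⟨c', hc'S, hc'⟩ := (csInf_lt_iff hSbdd ⟨_, hSne⟩).mp hc
    exact le_trans (measure_mono (fun x hx => lt_trans hc' hx)) hc'S.2
  -- every c < q satisfies m ≤ P {T > c}
  have hlt : ∀ c : ℝ, c < q → m ≤ P {x | c < T x} := by
    intro c hc
    by_cases hc1 : -1 ≤ c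
    · by_contra hcon
      push_neg at hcon
      exact absurd (csInf_le hSbdd ⟨hc1, hcon.le⟩) (not_le.mpr hc)
    · push_neg at hc1
      have : {x | c < T x} = univ := by
        ext x; simp only [mem_setOf_eq, mem_univ, iff_true]
        linarith [hT0 x]
      rw [this, measure_univ]; exact hm
  -- step 1 : P {q < T} ≤ m
  have step1 : P {x | q < T x} ≤ m := by
    have hun : {x | q < T x} = ⋃ n : ℕ, {x | q + 1 / (n + 1) < T x} := by
      ext x
      simp only [mem_setOf_eq, mem_iUnion]
      constructor
      · intro hx
        obtain ⟨n, hn⟩ := exists_nat_one_div_lt (sub_pos.mpr hx)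
        exact ⟨n, by linarith⟩
      · rintro ⟨n, hn⟩
        have : (0:ℝ) < 1 / (n+1) := by positivity
        linarith
    have hdir : Directed (· ⊆ ·) (fun n : ℕ => {x | q + 1 / (n + 1) < T x}) := by
      intro n k
      refine ⟨max n k, fun x hx => ?_, fun x hx => ?_⟩ <;>
        simp only [mem_setOf_eq] at hx ⊢
      · calc q + 1 / ((max n k : ℕ) + 1) ≤ q + 1 / ((n:ℝ)+1) := by
              have := frac_mono (Nat.le_max_left n k)
              push_cast at this ⊢; linarith
          _ < T x := hx
      · calc q + 1 / ((max n k : ℕ) + 1) ≤ q + 1 / ((k:ℝ)+1) := by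
              have := frac_mono (Nat.le_max_right n k)
              push_cast at this ⊢; linarith
          _ < T x := hx
    rw [hun, hdir.measure_iUnion]
    refine iSup_le fun n => hgt _ ?_
    have : (0:ℝ) < 1 / ((n:ℝ)+1) := by positivity
    linarith
  -- step 2 : m ≤ P {q < T}
  have step2 : m ≤ P {x | q < T x} := by
    have hle : m ≤ P {x | q ≤ T x} := by
      have hcompl : {x | q ≤ T x} = {x | T x < q}ᶜ := by
        ext x; simp [not_lt]
      have hun : {x | T x < q} = ⋃ n : ℕ, {x | T x ≤ q - 1 / (n + 1)} := by
        ext x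
        simp only [mem_setOf_eq, mem_iUnion]
        constructor
        · intro hx
          obtain ⟨n, hn⟩ := exists_nat_one_div_lt (sub_pos.mpr hx)
          exact ⟨n, by linarith⟩
        · rintro ⟨n, hn⟩
          have : (0:ℝ) < 1 / (n+1) := by positivity
          linarith
      have hdir : Directed (· ⊆ ·) (fun n : ℕ => {x | T x ≤ q - 1 / (n + 1)}) := by
        intro n k
        refine ⟨max n k, fun x hx => ?_, fun x hx => ?_⟩ <;>
          simp only [mem_setOf_eq] at hx ⊢
        · refine le_trans hx ?_
          have := frac_mono (Nat.le_max_left n k)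
          push_cast at this ⊢; linarith
        · refine le_trans hx ?_
          have := frac_mono (Nat.le_max_right n k)
          push_cast at this ⊢; linarith
      have hmeasn : ∀ n : ℕ, P {x | T x ≤ q - 1 / (n + 1)} ≤ 1 - m := by
        intro n
        have h1 : {x | T x ≤ q - 1/(n+1)} = {x | q - 1/(n+1) < T x}ᶜ := by
          ext x; simp [not_lt]
        rw [h1, prob_compl_eq_one_sub (measurableSet_lt measurable_const hTm)]
        refine tsub_le_tsub_left (hlt _ ?_) 1
        have : (0:ℝ) < 1/((n:ℝ)+1) := by positivity
        linarith
      have hltq : P {x | T x < q} ≤ 1 - m := by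
        rw [hun, hdir.measure_iUnion]; exact iSup_le hmeasn
      rw [hcompl, prob_compl_eq_one_sub (measurableSet_lt hTm measurable_const)]
      calc m = 1 - (1 - m) := (ENNReal.sub_sub_cancel ENNReal.one_ne_top hm).symm
        _ ≤ 1 - P {x | T x < q} := tsub_le_tsub_left hltq 1
    have : P {x | q ≤ T x} = P {x | q < T x} := by
      have hsub : {x | q ≤ T x} ⊆ {x | q < T x} ∪ {x | T x = q} := by
        intro x hx
        rcases lt_or_eq_of_le (show q ≤ T x from hx) with h | h
        · exact Or.inl h
        · exact Or.inr h.symm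
      refine le_antisymm ?_ (measure_mono (fun x hx => le_of_lt (show q < T x from hx)))
      calc P {x | q ≤ T x} ≤ P ({x | q < T x} ∪ {x | T x = q}) := measure_mono hsub
        _ ≤ P {x | q < T x} + P {x | T x = q} := measure_union_le _ _
        _ = P {x | q < T x} := by rw [hatom q, add_zero]
    rw [← this]; exact hle
  exact le_antisymm step1 step2

/-- Hardy–Littlewood style swap: integrating over the top level set of `T`
with the same measure is larger. -/
lemma hl_swap (P : Measure α) [IsFiniteMeasure P] {T : α → ℝ} (hTm : Measurable T)
    {A : Set α} (hA : MeasurableSet A) (q : ℝ)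
    (hPA : P A = P {x | q < T x}) :
    ∫⁻ x in A, ENNReal.ofReal (T x) ∂P ≤ ∫⁻ x in {x | q < T x}, ENNReal.ofReal (T x) ∂P := by
  set V : Set α := {x | q < T x} with hV
  have hVm : MeasurableSet V := measurableSet_lt measurable_const hTm
  have hfin : P (A ∩ V) ≠ ⊤ := measure_ne_top _ _
  have hmeq : P (A \ V) = P (V \ A) := by
    have h1 : P (A \ V) = P A - P (A ∩ V) := by
      rw [← Set.diff_self_inter]
      exact measure_diff Set.inter_subset_left (hA.inter hVm).nullMeasurableSet hfin
    have h2 : P (V \ A) = P V - P (V ∩ A) := by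
      rw [← Set.diff_self_inter]
      exact measure_diff Set.inter_subset_left (hVm.inter hA).nullMeasurableSet
        (measure_ne_top _ _)
    rw [h1, h2, hPA, Set.inter_comm]
  have hsplitA : ∫⁻ x in A, ENNReal.ofReal (T x) ∂P
      = ∫⁻ x in A ∩ V, ENNReal.ofReal (T x) ∂P + ∫⁻ x in A \ V, ENNReal.ofReal (T x) ∂P := by
    calc ∫⁻ x in A, ENNReal.ofReal (T x) ∂P
        = ∫⁻ x in (A ∩ V) ∪ (A \ V), ENNReal.ofReal (T x) ∂P := by
          rw [Set.inter_union_diff]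
      _ = _ := lintegral_union (hA.diff hVm) (Set.disjoint_of_subset_left Set.inter_subset_right disjoint_sdiff_self_right)
  have hsplitV : ∫⁻ x in V, ENNReal.ofReal (T x) ∂P
      = ∫⁻ x in A ∩ V, ENNReal.ofReal (T x) ∂P + ∫⁻ x in V \ A, ENNReal.ofReal (T x) ∂P := by
    calc ∫⁻ x in V, ENNReal.ofReal (T x) ∂P
        = ∫⁻ x in (A ∩ V) ∪ (V \ A), ENNReal.ofReal (T x) ∂P := by
          rw [Set.inter_comm, Set.inter_union_diff]
      _ = _ := lintegral_union (hVm.diff hA) (Set.disjoint_of_subset_left Set.inter_subset_left disjoint_sdiff_self_right)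
  rw [hsplitA, hsplitV]
  refine add_le_add le_rfl ?_
  calc ∫⁻ x in A \ V, ENNReal.ofReal (T x) ∂P
      ≤ ∫⁻ _x in A \ V, ENNReal.ofReal q ∂P := by
        refine setLIntegral_mono measurable_const fun x hx => ?_
        exact ENNReal.ofReal_le_ofReal (not_lt.mp hx.2)
    _ = ENNReal.ofReal q * P (A \ V) := by rw [setLIntegral_const, mul_comm]
    _ = ENNReal.ofReal q * P (V \ A) := by rw [hmeq]
    _ = ∫⁻ _x in V \ A, ENNReal.ofReal q ∂P := by rw [setLIntegral_const, mul_comm]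
    _ ≤ ∫⁻ x in V \ A, ENNReal.ofReal (T x) ∂P := by
        refine setLIntegral_mono (ENNReal.measurable_ofReal.comp hTm) fun x hx => ?_
        exact ENNReal.ofReal_le_ofReal (le_of_lt hx.1)


lemma integrable_bdd {β : Type*} [MeasurableSpace β] (μ : Measure β) [IsFiniteMeasure μ]
    {f : β → ℝ} (hf : AEStronglyMeasurable f μ) (C : ℝ) (h : ∀ x, |f x| ≤ C) :
    Integrable f μ :=
  ⟨hf, HasFiniteIntegral.of_bounded (C := C)
    (Filter.Eventually.of_forall (fun x => by simpa [Real.norm_eq_abs] using h x))⟩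

lemma section_ineq {β : Type*} [MeasurableSpace β] [LinearOrder β]
    (μ : Measure β) [IsFiniteMeasure μ]
    {dX dY : β → ℝ} (hdX : Integrable dX μ) (hdY : Integrable dY μ)
    (θh : β) (h1 : ∀ θ', θ' < θh → dX θ' ≤ dY θ') (h2 : ∀ θ', θh < θ' → dY θ' ≤ dX θ')
    (hint : ∫ θ', dY θ' ∂μ ≤ ∫ θ', dX θ' ∂μ)
    {U : Set β} (hU : MeasurableSet U) (hUup : ∀ a ∈ U, ∀ b, a ≤ b → b ∈ U) :
    ∫ θ' in U, dY θ' ∂μ ≤ ∫ θ' in U, dX θ' ∂μ := by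
  by_cases hc : ∃ x, x ∉ U ∧ θh ≤ x
  · obtain ⟨x, hxU, hx⟩ := hc
    refine setIntegral_mono_on hdY.integrableOn hdX.integrableOn hU fun y hy => ?_
    have hxy : x < y := lt_of_not_ge fun h => hxU (hUup y hy x h)
    exact h2 y (lt_of_le_of_lt hx hxy)
  · push_neg at hc
    have hcineq : ∫ θ' in Uᶜ, dX θ' ∂μ ≤ ∫ θ' in Uᶜ, dY θ' ∂μ :=
      setIntegral_mono_on hdX.integrableOn hdY.integrableOn hU.compl fun y hy =>
        h1 y (hc y hy)
    have hY := integral_add_compl hU hdY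
    have hX := integral_add_compl hU hdX
    linarith


lemma upperset_ineq
    (P : Measure (Θ × Θ)) [IsProbabilityMeasure P]
    (tX₁ tX₂ tY₁ tY₂ : Θ → Θ → ℝ)
    (hXm₁ : Measurable (Function.uncurry tX₁)) (hXm₂ : Measurable (Function.uncurry tX₂))
    (hYm₁ : Measurable (Function.uncurry tY₁)) (hYm₂ : Measurable (Function.uncurry tY₂))
    (hX₁0 : ∀ θ θ', 0 ≤ tX₁ θ θ') (hX₂0 : ∀ θ θ', 0 ≤ tX₂ θ θ')
    (hY₁0 : ∀ θ θ', 0 ≤ tY₁ θ θ') (hY₂0 : ∀ θ θ', 0 ≤ tY₂ θ θ')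
    {M : ℝ} (hM : ∀ θ θ', tX₁ θ θ' ≤ M ∧ tX₂ θ θ' ≤ M ∧ tY₁ θ θ' ≤ M ∧ tY₂ θ θ' ≤ M)
    (κ₁ κ₂ : Kernel Θ Θ) [IsMarkovKernel κ₁] [IsMarkovKernel κ₂]
    (hκ₁ : P = P.fst ⊗ₘ κ₁)
    (hκ₂ : P.map Prod.swap = P.snd ⊗ₘ κ₂)
    (hNWSCC₁ : ∀ θ : Θ, ∃ θh : Θ,
      (∀ θ' : Θ, θ' < θh → tX₁ θ θ' ≤ tY₁ θ θ') ∧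
      (∀ θ' : Θ, θh < θ' → tY₁ θ θ' ≤ tX₁ θ θ'))
    (hNWSCC₂ : ∀ θ : Θ, ∃ θh : Θ,
      (∀ θ' : Θ, θ' < θh → tX₂ θ θ' ≤ tY₂ θ θ') ∧
      (∀ θ' : Θ, θh < θ' → tY₂ θ θ' ≤ tX₂ θ θ'))
    (hRRC₁ : ∀ᵐ θ ∂P.fst, ∫ θ', tY₁ θ θ' ∂(κ₁ θ) ≤ ∫ θ', tX₁ θ θ' ∂(κ₁ θ))
    (hRRC₂ : ∀ᵐ θ ∂P.snd, ∫ θ', tY₂ θ θ' ∂(κ₂ θ) ≤ ∫ θ', tX₂ θ θ' ∂(κ₂ θ))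
    {V : Set (Θ × Θ)} (hV : MeasurableSet V) (hVup : ∀ x ∈ V, ∀ y, x ≤ y → y ∈ V) :
    ∫ x in V, (tY₁ x.1 x.2 + tY₂ x.2 x.1) ∂P ≤ ∫ x in V, (tX₁ x.1 x.2 + tX₂ x.2 x.1) ∂P := by
  set M₀ : ℝ := max M 0 with hM₀
  have hM₀0 : 0 ≤ M₀ := le_max_right _ _
  -- bounds
  have habs : ∀ (t : Θ → Θ → ℝ), (∀ a b, 0 ≤ t a b) → (∀ a b, t a b ≤ M)
      → ∀ a b, |t a b| ≤ M₀ := fun t h0 h1 a b => by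
    rw [abs_of_nonneg (h0 a b)]; exact le_trans (h1 a b) (le_max_left _ _)
  have hXa₁ : ∀ a b, |tX₁ a b| ≤ M₀ := habs _ hX₁0 (fun a b => (hM a b).1)
  have hXa₂ : ∀ a b, |tX₂ a b| ≤ M₀ := habs _ hX₂0 (fun a b => (hM a b).2.1)
  have hYa₁ : ∀ a b, |tY₁ a b| ≤ M₀ := habs _ hY₁0 (fun a b => (hM a b).2.2.1)
  have hYa₂ : ∀ a b, |tY₂ a b| ≤ M₀ := habs _ hY₂0 (fun a b => (hM a b).2.2.2)
  -- measurability of coordinate functions on the product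
  have hmX₁ : Measurable (fun x : Θ × Θ => tX₁ x.1 x.2) := hXm₁
  have hmY₁ : Measurable (fun x : Θ × Θ => tY₁ x.1 x.2) := hYm₁
  have hmX₂ : Measurable (fun x : Θ × Θ => tX₂ x.2 x.1) :=
    hXm₂.comp (measurable_snd.prodMk measurable_fst)
  have hmY₂ : Measurable (fun x : Θ × Θ => tY₂ x.2 x.1) :=
    hYm₂.comp (measurable_snd.prodMk measurable_fst)
  -- integrability on P of all four coordinate functions
  have hintX₁ : Integrable (fun x : Θ × Θ => tX₁ x.1 x.2) P :=
    integrable_bdd P hmX₁.aestronglyMeasurable M₀ (fun x => hXa₁ _ _)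
  have hintY₁ : Integrable (fun x : Θ × Θ => tY₁ x.1 x.2) P :=
    integrable_bdd P hmY₁.aestronglyMeasurable M₀ (fun x => hYa₁ _ _)
  have hintX₂ : Integrable (fun x : Θ × Θ => tX₂ x.2 x.1) P :=
    integrable_bdd P hmX₂.aestronglyMeasurable M₀ (fun x => hXa₂ _ _)
  have hintY₂ : Integrable (fun x : Θ × Θ => tY₂ x.2 x.1) P :=
    integrable_bdd P hmY₂.aestronglyMeasurable M₀ (fun x => hYa₂ _ _)
  -- first-coordinate inequality
  have I1 : ∫ x in V, tY₁ x.1 x.2 ∂P ≤ ∫ x in V, tX₁ x.1 x.2 ∂P := by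
    set f : Θ × Θ → ℝ := V.indicator (fun x => tX₁ x.1 x.2 - tY₁ x.1 x.2) with hf
    have hfm : Measurable f := (hmX₁.sub hmY₁).indicator hV
    have hfb : ∀ x, |f x| ≤ 2 * M₀ := by
      intro x
      by_cases hx : x ∈ V
      · simp only [hf, Set.indicator_of_mem hx]
        calc |tX₁ x.1 x.2 - tY₁ x.1 x.2| ≤ |tX₁ x.1 x.2| + |tY₁ x.1 x.2| := abs_sub _ _
          _ ≤ 2 * M₀ := by have := hXa₁ x.1 x.2; have := hYa₁ x.1 x.2; linarith
      · simp only [hf, Set.indicator_of_notMem hx, abs_zero]; linarith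
    have hfint : Integrable f P := integrable_bdd P hfm.aestronglyMeasurable _ hfb
    have hfint' : Integrable f (P.fst ⊗ₘ κ₁) := by rw [← hκ₁]; exact hfint
    have hkey : 0 ≤ ∫ x, f x ∂P := by
      have h1 : ∫ x, f x ∂P = ∫ θ, ∫ θ', f (θ, θ') ∂(κ₁ θ) ∂P.fst := by
        conv_lhs => rw [hκ₁]
        exact Measure.integral_compProd hfint'
      rw [h1]
      refine integral_nonneg_of_ae ?_
      filter_upwards [hRRC₁] with θ hθ
      obtain ⟨θh, hcr1, hcr2⟩ := hNWSCC₁ θ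
      set U : Set Θ := Prod.mk θ ⁻¹' V with hU
      have hUm : MeasurableSet U := measurable_prodMk_left hV
      have hUup : ∀ a ∈ U, ∀ b, a ≤ b → b ∈ U := by
        intro a ha b hab
        exact hVup (θ, a) ha (θ, b) (Prod.mk_le_mk.mpr ⟨le_rfl, hab⟩)
      have hsec : ∀ θ', f (θ, θ') = U.indicator (fun θ' => tX₁ θ θ' - tY₁ θ θ') θ' := by
        intro θ'
        by_cases hx : (θ, θ') ∈ V <;>
          simp [hf, hU, Set.indicator_apply, Set.mem_preimage, hx]
      have hiX : Integrable (tX₁ θ) (κ₁ θ) :=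
        integrable_bdd _ (hXm₁.comp measurable_prodMk_left).aestronglyMeasurable M₀
          (fun θ' => hXa₁ _ _)
      have hiY : Integrable (tY₁ θ) (κ₁ θ) :=
        integrable_bdd _ (hYm₁.comp measurable_prodMk_left).aestronglyMeasurable M₀
          (fun θ' => hYa₁ _ _)
      calc (0:ℝ) ≤ ∫ θ' in U, tX₁ θ θ' ∂(κ₁ θ) - ∫ θ' in U, tY₁ θ θ' ∂(κ₁ θ) := by
            have := section_ineq (κ₁ θ) hiX hiY θh hcr1 hcr2 hθ hUm hUup
            linarith
        _ = ∫ θ' in U, (tX₁ θ θ' - tY₁ θ θ') ∂(κ₁ θ) :=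
            (integral_sub hiX.integrableOn hiY.integrableOn).symm
        _ = ∫ θ', U.indicator (fun θ' => tX₁ θ θ' - tY₁ θ θ') θ' ∂(κ₁ θ) :=
            (integral_indicator hUm).symm
        _ = ∫ θ', f (θ, θ') ∂(κ₁ θ) := by
            refine integral_congr_ae (Filter.Eventually.of_forall fun θ' => ?_)
            exact (hsec θ').symm
    have hsub : ∫ x, f x ∂P
        = ∫ x in V, tX₁ x.1 x.2 ∂P - ∫ x in V, tY₁ x.1 x.2 ∂P := by
      rw [hf, integral_indicator hV, integral_sub hintX₁.integrableOn hintY₁.integrableOn]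
    linarith [hkey, hsub.symm.le, hsub.le]
  -- second-coordinate inequality
  have I2 : ∫ x in V, tY₂ x.2 x.1 ∂P ≤ ∫ x in V, tX₂ x.2 x.1 ∂P := by
    haveI : IsProbabilityMeasure (P.map Prod.swap) :=
      Measure.isProbabilityMeasure_map measurable_swap.aemeasurable
    set W : Set (Θ × Θ) := Prod.swap ⁻¹' V with hWdef
    have hW : MeasurableSet W := hV.preimage measurable_swap
    have hWup : ∀ a ∈ W, ∀ b, a ≤ b → b ∈ W := by
      intro a ha b hab
      exact hVup a.swap ha b.swap (Prod.mk_le_mk.mpr ⟨hab.2, hab.1⟩)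
    set e : Θ × Θ → ℝ := W.indicator (fun y => tX₂ y.1 y.2 - tY₂ y.1 y.2) with he
    have hem : Measurable e := (hXm₂.sub hYm₂).indicator hW
    have heb : ∀ x, |e x| ≤ 2 * M₀ := by
      intro x
      by_cases hx : x ∈ W
      · simp only [he, Set.indicator_of_mem hx]
        calc |tX₂ x.1 x.2 - tY₂ x.1 x.2| ≤ |tX₂ x.1 x.2| + |tY₂ x.1 x.2| := abs_sub _ _
          _ ≤ 2 * M₀ := by have := hXa₂ x.1 x.2; have := hYa₂ x.1 x.2; linarith
      · simp only [he, Set.indicator_of_notMem hx, abs_zero]; linarith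
    have heint : Integrable e (P.map Prod.swap) :=
      integrable_bdd _ hem.aestronglyMeasurable _ heb
    have heint' : Integrable e (P.snd ⊗ₘ κ₂) := by rw [← hκ₂]; exact heint
    set f : Θ × Θ → ℝ := V.indicator (fun x => tX₂ x.2 x.1 - tY₂ x.2 x.1) with hf
    have hfe : ∀ x, f x = e (Prod.swap x) := by
      intro x
      by_cases hx : x ∈ V <;>
        simp [hf, he, hWdef, Set.indicator_apply, Set.mem_preimage, Prod.swap_swap, hx]
    have hkey : 0 ≤ ∫ x, f x ∂P := by
      have h0 : ∫ x, f x ∂P = ∫ y, e y ∂(P.map Prod.swap) := by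
        rw [integral_map measurable_swap.aemeasurable hem.aestronglyMeasurable]
        exact integral_congr_ae (Filter.Eventually.of_forall hfe)
      have h1 : ∫ y, e y ∂(P.map Prod.swap) = ∫ θ, ∫ θ', e (θ, θ') ∂(κ₂ θ) ∂P.snd := by
        rw [hκ₂]
        exact Measure.integral_compProd heint'
      rw [h0, h1]
      refine integral_nonneg_of_ae ?_
      filter_upwards [hRRC₂] with θ hθ
      obtain ⟨θh, hcr1, hcr2⟩ := hNWSCC₂ θ
      set U : Set Θ := Prod.mk θ ⁻¹' W with hU
      have hUm : MeasurableSet U := measurable_prodMk_left hW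
      have hUup : ∀ a ∈ U, ∀ b, a ≤ b → b ∈ U := by
        intro a ha b hab
        exact hWup (θ, a) ha (θ, b) (Prod.mk_le_mk.mpr ⟨le_rfl, hab⟩)
      have hiX : Integrable (tX₂ θ) (κ₂ θ) :=
        integrable_bdd _ (hXm₂.comp measurable_prodMk_left).aestronglyMeasurable M₀
          (fun θ' => hXa₂ _ _)
      have hiY : Integrable (tY₂ θ) (κ₂ θ) :=
        integrable_bdd _ (hYm₂.comp measurable_prodMk_left).aestronglyMeasurable M₀
          (fun θ' => hYa₂ _ _)
      calc (0:ℝ) ≤ ∫ θ' in U, tX₂ θ θ' ∂(κ₂ θ) - ∫ θ' in U, tY₂ θ θ' ∂(κ₂ θ) := by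
            have := section_ineq (κ₂ θ) hiX hiY θh hcr1 hcr2 hθ hUm hUup
            linarith
        _ = ∫ θ' in U, (tX₂ θ θ' - tY₂ θ θ') ∂(κ₂ θ) :=
            (integral_sub hiX.integrableOn hiY.integrableOn).symm
        _ = ∫ θ', U.indicator (fun θ' => tX₂ θ θ' - tY₂ θ θ') θ' ∂(κ₂ θ) :=
            (integral_indicator hUm).symm
        _ = ∫ θ', e (θ, θ') ∂(κ₂ θ) := by
            refine integral_congr_ae (Filter.Eventually.of_forall fun θ' => ?_)
            by_cases hx : (θ, θ') ∈ W <;>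
              simp [he, hU, Set.indicator_apply, Set.mem_preimage, hx]
    have hsub : ∫ x, f x ∂P
        = ∫ x in V, tX₂ x.2 x.1 ∂P - ∫ x in V, tY₂ x.2 x.1 ∂P := by
      rw [hf, integral_indicator hV, integral_sub hintX₂.integrableOn hintY₂.integrableOn]
    linarith [hkey, hsub.le]
  calc ∫ x in V, (tY₁ x.1 x.2 + tY₂ x.2 x.1) ∂P
      = ∫ x in V, tY₁ x.1 x.2 ∂P + ∫ x in V, tY₂ x.2 x.1 ∂P :=
        integral_add hintY₁.integrableOn hintY₂.integrableOn
    _ ≤ ∫ x in V, tX₁ x.1 x.2 ∂P + ∫ x in V, tX₂ x.2 x.1 ∂P := add_le_add I1 I2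
    _ = ∫ x in V, (tX₁ x.1 x.2 + tX₂ x.2 x.1) ∂P :=
        (integral_add hintX₁.integrableOn hintX₂.integrableOn).symm

end Stmt11Aux

theorem stmt11
    (P : Measure (Θ × Θ)) [IsProbabilityMeasure P]
    (𝒬 : Set (Measure (Θ × Θ)))
    (h𝒬 : ∀ Q ∈ 𝒬, IsProbabilityMeasure Q ∧ Q ≪ P)
    -- rearrangement invariance of 𝒬
    (hinv : ∀ Q ∈ 𝒬, ∀ Q' : Measure (Θ × Θ), IsProbabilityMeasure Q' → Q' ≪ P →
      IsRearrangement P Q Q' → Q' ∈ 𝒬)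
    -- transfer functions: tX i θ θ' is bidder i's payment, own type θ, competitor type θ'
    (tX₁ tX₂ tY₁ tY₂ : Θ → Θ → ℝ)
    (hXm₁ : Measurable (Function.uncurry tX₁)) (hXm₂ : Measurable (Function.uncurry tX₂))
    (hYm₁ : Measurable (Function.uncurry tY₁)) (hYm₂ : Measurable (Function.uncurry tY₂))
    (hX₁0 : ∀ θ θ', 0 ≤ tX₁ θ θ') (hX₂0 : ∀ θ θ', 0 ≤ tX₂ θ θ')
    (hY₁0 : ∀ θ θ', 0 ≤ tY₁ θ θ') (hY₂0 : ∀ θ θ', 0 ≤ tY₂ θ θ')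
    (hbdd : ∃ M : ℝ, ∀ θ θ', tX₁ θ θ' ≤ M ∧ tX₂ θ θ' ≤ M ∧ tY₁ θ θ' ≤ M ∧ tY₂ θ θ' ≤ M)
    -- total transfers nondecreasing in each argument
    (hTXmono : Monotone (fun x : Θ × Θ => tX₁ x.1 x.2 + tX₂ x.2 x.1))
    (hTYmono : Monotone (fun x : Θ × Θ => tY₁ x.1 x.2 + tY₂ x.2 x.1))
    -- atomless distributions of total transfers under P
    (hXatomless : ∀ c : ℝ, 0 ≤ c → P {x | tX₁ x.1 x.2 + tX₂ x.2 x.1 = c} = 0)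
    (hYatomless : ∀ c : ℝ, 0 ≤ c → P {x | tY₁ x.1 x.2 + tY₂ x.2 x.1 = c} = 0)
    -- disintegration of P: κ₁ θ is the conditional law of bidder 2's type given
    -- bidder 1's type θ, and κ₂ θ that of bidder 1's type given bidder 2's type θ
    (κ₁ κ₂ : Kernel Θ Θ) [IsMarkovKernel κ₁] [IsMarkovKernel κ₂]
    (hκ₁ : P = P.fst ⊗ₘ κ₁)
    (hκ₂ : P.map Prod.swap = P.snd ⊗ₘ κ₂)
    -- (NWSCC) negative weak single-crossing condition
    (hNWSCC₁ : ∀ θ : Θ, ∃ θh : Θ,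
      (∀ θ' : Θ, θ' < θh → tX₁ θ θ' ≤ tY₁ θ θ') ∧
      (∀ θ' : Θ, θh < θ' → tY₁ θ θ' ≤ tX₁ θ θ'))
    (hNWSCC₂ : ∀ θ : Θ, ∃ θh : Θ,
      (∀ θ' : Θ, θ' < θh → tX₂ θ θ' ≤ tY₂ θ θ') ∧
      (∀ θ' : Θ, θh < θ' → tY₂ θ θ' ≤ tX₂ θ θ'))
    -- (RRC) reference revenue condition
    (hRRC₁ : ∀ᵐ θ ∂P.fst, ∫ θ', tY₁ θ θ' ∂(κ₁ θ) ≤ ∫ θ', tX₁ θ θ' ∂(κ₁ θ))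
    (hRRC₂ : ∀ᵐ θ ∂P.snd, ∫ θ', tY₂ θ θ' ∂(κ₂ θ) ≤ ∫ θ', tX₂ θ θ' ∂(κ₂ θ)) :
    (⨆ Q ∈ 𝒬, ∫⁻ x, ENNReal.ofReal (tY₁ x.1 x.2 + tY₂ x.2 x.1) ∂Q)
      ≤ ⨆ Q ∈ 𝒬, ∫⁻ x, ENNReal.ofReal (tX₁ x.1 x.2 + tX₂ x.2 x.1) ∂Q := by
  classical
  obtain ⟨M, hM⟩ := hbdd
  set M₀ : ℝ := max M 0 with hM₀def
  have hM₀0 : (0:ℝ) ≤ M₀ := le_max_right _ _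
  have hMM₀ : M ≤ M₀ := le_max_left _ _
  set TX : Θ × Θ → ℝ := fun x => tX₁ x.1 x.2 + tX₂ x.2 x.1 with hTXdef
  set TY : Θ × Θ → ℝ := fun x => tY₁ x.1 x.2 + tY₂ x.2 x.1 with hTYdef
  have hTXm : Measurable TX :=
    hXm₁.add (hXm₂.comp (measurable_snd.prodMk measurable_fst))
  have hTYm : Measurable TY :=
    hYm₁.add (hYm₂.comp (measurable_snd.prodMk measurable_fst))
  have hTX0 : ∀ x, 0 ≤ TX x := fun x => add_nonneg (hX₁0 _ _) (hX₂0 _ _)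
  have hTY0 : ∀ x, 0 ≤ TY x := fun x => add_nonneg (hY₁0 _ _) (hY₂0 _ _)
  have hTXB : ∀ x, TX x ≤ 2 * M₀ := fun x => by
    have h1 := (hM x.1 x.2).1; have h2 := (hM x.2 x.1).2.1
    simp only [hTXdef]; linarith
  have hTYB : ∀ x, TY x ≤ 2 * M₀ := fun x => by
    have h1 := (hM x.1 x.2).2.2.1; have h2 := (hM x.2 x.1).2.2.2
    simp only [hTYdef]; linarith
  have hXatom : ∀ c : ℝ, P {x | TX x = c} = 0 := by
    intro c
    rcases le_or_gt 0 c with h | h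
    · exact hXatomless c h
    · have : {x | TX x = c} = (∅ : Set (Θ × Θ)) := by
        ext x; simp only [Set.mem_setOf_eq, Set.mem_empty_iff_false, iff_false]
        intro hc; have := hTX0 x; linarith
      rw [this, measure_empty]
  have hYatom : ∀ c : ℝ, P {x | TY x = c} = 0 := by
    intro c
    rcases le_or_gt 0 c with h | h
    · exact hYatomless c h
    · have : {x | TY x = c} = (∅ : Set (Θ × Θ)) := by
        ext x; simp only [Set.mem_setOf_eq, Set.mem_empty_iff_false, iff_false]
        intro hc; have := hTY0 x; linarith
      rw [this, measure_empty]
  set TX' : Θ × Θ → ℝ≥0∞ := fun x => ENNReal.ofReal (TX x) with hTX'def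
  set TY' : Θ × Θ → ℝ≥0∞ := fun x => ENNReal.ofReal (TY x) with hTY'def
  have hTX'm : Measurable TX' := ENNReal.measurable_ofReal.comp hTXm
  have hTY'm : Measurable TY' := ENNReal.measurable_ofReal.comp hTYm
  -- the upper level set inequality from NWSCC + RRC
  have hupV : ∀ cc : ℝ, ∫⁻ x in {x | cc < TY x}, TY' x ∂P
      ≤ ∫⁻ x in {x | cc < TY x}, TX' x ∂P := by
    intro cc
    have hVm : MeasurableSet {x | cc < TY x} := measurableSet_lt measurable_const hTYm
    have hVup : ∀ x ∈ {x | cc < TY x}, ∀ y, x ≤ y → y ∈ {x | cc < TY x} :=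
      fun x hx y hxy => lt_of_lt_of_le hx (hTYmono hxy)
    have hB := Stmt11Aux.upperset_ineq P tX₁ tX₂ tY₁ tY₂ hXm₁ hXm₂ hYm₁ hYm₂
      hX₁0 hX₂0 hY₁0 hY₂0 hM κ₁ κ₂ hκ₁ hκ₂ hNWSCC₁ hNWSCC₂ hRRC₁ hRRC₂ hVm hVup
    have hIY : Integrable TY (P.restrict {x | cc < TY x}) :=
      (Stmt11Aux.integrable_bdd P hTYm.aestronglyMeasurable (2*M₀)
        (fun x => by rw [abs_of_nonneg (hTY0 x)]; exact hTYB x)).integrableOn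
    have hIX : Integrable TX (P.restrict {x | cc < TY x}) :=
      (Stmt11Aux.integrable_bdd P hTXm.aestronglyMeasurable (2*M₀)
        (fun x => by rw [abs_of_nonneg (hTX0 x)]; exact hTXB x)).integrableOn
    calc ∫⁻ x in {x | cc < TY x}, TY' x ∂P
        = ENNReal.ofReal (∫ x in {x | cc < TY x}, TY x ∂P) :=
          (ofReal_integral_eq_lintegral_ofReal hIY (ae_of_all _ hTY0)).symm
      _ ≤ ENNReal.ofReal (∫ x in {x | cc < TY x}, TX x ∂P) := ENNReal.ofReal_le_ofReal hB
      _ = ∫⁻ x in {x | cc < TY x}, TX' x ∂P :=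
          ofReal_integral_eq_lintegral_ofReal hIX (ae_of_all _ hTX0)
  -- now the main argument, one Q at a time
  refine iSup₂_le fun Q hQ => ?_
  obtain ⟨hQprob, hQac⟩ := h𝒬 Q hQ
  haveI := hQprob
  haveI : Q.HaveLebesgueDecomposition P := Measure.haveLebesgueDecomposition_of_sigmaFinite Q P
  set g : Θ × Θ → ℝ≥0∞ := Q.rnDeriv P with hgdef
  have hgm : Measurable g := Measure.measurable_rnDeriv Q P
  have hgfin : ∀ᵐ x ∂P, g x < ∞ := Measure.rnDeriv_lt_top Q P
  have hginf_null : P {x | g x = ∞} = 0 := by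
    have := hgfin
    rw [MeasureTheory.ae_iff] at this
    refine measure_mono_null (fun x hx => ?_) this
    simp only [Set.mem_setOf_eq, not_lt] at *
    exact le_of_eq hx.symm
  set m : ℝ → ℝ≥0∞ := fun t => P {x | ENNReal.ofReal t < g x} with hmdef
  have hm1 : ∀ t, m t ≤ 1 := fun t => prob_le_one
  have hmanti : Antitone m := fun s t hst =>
    measure_mono (fun x hx => lt_of_le_of_lt (ENNReal.ofReal_le_ofReal hst) hx)
  set cX : ℝ → ℝ := fun t => Stmt11Aux.quant P TX (m t) with hcXdef
  set cY : ℝ → ℝ := fun t => Stmt11Aux.quant P TY (m t) with hcYdef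
  have hcXmono : Monotone cX := fun s t hst =>
    Stmt11Aux.quant_anti P TX hTXB (hmanti hst)
  have hPU : ∀ t : ℝ, P {x | cX t < TX x} = m t := fun t =>
    Stmt11Aux.quant_spec P hTXm hTX0 hTXB hXatom (hm1 t)
  have hPV : ∀ t : ℝ, P {x | cY t < TY x} = m t := fun t =>
    Stmt11Aux.quant_spec P hTYm hTY0 hTYB hYatom (hm1 t)
  have hgsetm : ∀ t : ℝ, MeasurableSet {x | ENNReal.ofReal t < g x} :=
    fun t => measurableSet_lt measurable_const hgm
  -- the rearranged density h, comonotone with TX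
  set h : Θ × Θ → ℝ≥0∞ :=
    fun x => (volume.restrict (Set.Ioi (0:ℝ))) (Prod.mk x ⁻¹' {p : (Θ × Θ) × ℝ | cX p.2 < TX p.1})
    with hhdef
  have hEm : MeasurableSet {p : (Θ × Θ) × ℝ | cX p.2 < TX p.1} :=
    measurableSet_lt (hcXmono.measurable.comp measurable_snd) (hTXm.comp measurable_fst)
  have hhm : Measurable h := measurable_measure_prodMk_left hEm
  have hsecm : ∀ x : Θ × Θ, MeasurableSet {t : ℝ | cX t < TX x} :=
    fun x => measurableSet_lt hcXmono.measurable measurable_const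
  have hrestr : ∀ x, h x = volume ({t : ℝ | cX t < TX x} ∩ Set.Ioi 0) := by
    intro x
    rw [hhdef]
    exact Measure.restrict_apply (hsecm x)
  -- h x is at least ofReal t whenever c t < TX x, t > 0
  have hIoc : ∀ (x : Θ × Θ) (t : ℝ), 0 < t → cX t < TX x → ENNReal.ofReal t ≤ h x := by
    intro x t ht hct
    rw [hrestr x]
    calc ENNReal.ofReal t = volume (Set.Ioc (0:ℝ) t) := by rw [Real.volume_Ioc, sub_zero]
      _ ≤ volume ({t : ℝ | cX t < TX x} ∩ Set.Ioi 0) := by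
          refine measure_mono fun s hs => ?_
          exact ⟨lt_of_le_of_lt (hcXmono hs.2) hct, hs.1⟩
  have hupb : ∀ (x : Θ × Θ) (s : ℝ), 0 ≤ s →
      (∀ q : ℚ, s < (q:ℝ) → ¬ (cX (q:ℝ) < TX x)) → h x ≤ ENNReal.ofReal s := by
    intro x s hs hq
    rw [hrestr x]
    have hsub : {t : ℝ | cX t < TX x} ∩ Set.Ioi 0 ⊆ Set.Ioc 0 s := by
      rintro t ⟨ht1, ht2⟩
      refine ⟨ht2, ?_⟩
      by_contra hcon
      push_neg at hcon
      obtain ⟨q, hq1, hq2⟩ := exists_rat_btwn hcon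
      exact hq q hq1 (lt_of_le_of_lt (hcXmono hq2.le) ht1)
    calc volume ({t : ℝ | cX t < TX x} ∩ Set.Ioi 0) ≤ volume (Set.Ioc 0 s) :=
          measure_mono hsub
      _ = ENNReal.ofReal s := by rw [Real.volume_Ioc, sub_zero]
  have hdist : ∀ s : ℝ, 0 ≤ s →
      {x | ENNReal.ofReal s < h x}
        = ⋃ (q : {q : ℚ // s < (q:ℝ)}), {x | cX ((q:ℚ):ℝ) < TX x} := by
    intro s hs
    ext x
    simp only [Set.mem_setOf_eq, Set.mem_iUnion]
    constructor
    · intro hx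
      by_contra hcon
      push_neg at hcon
      refine absurd hx (not_lt.mpr (hupb x s hs fun q hq => ?_))
      exact not_lt.mpr (hcon ⟨q, hq⟩)
    · rintro ⟨⟨q, hq1⟩, hq2⟩
      have h0q : (0:ℝ) < (q:ℝ) := lt_of_le_of_lt hs hq1
      calc ENNReal.ofReal s < ENNReal.ofReal (q:ℝ) :=
            (ENNReal.ofReal_lt_ofReal_iff h0q).mpr hq1
        _ ≤ h x := hIoc x q h0q hq2
  have hdistg : ∀ s : ℝ, 0 ≤ s →
      {x | ENNReal.ofReal s < g x}
        = ⋃ (q : {q : ℚ // s < (q:ℝ)}), {x | ENNReal.ofReal ((q:ℚ):ℝ) < g x} := by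
    intro s hs
    ext x
    simp only [Set.mem_setOf_eq, Set.mem_iUnion]
    constructor
    · intro hx
      rcases eq_or_ne (g x) ∞ with hinf | hfin
      · obtain ⟨q, hq⟩ := exists_rat_gt s
        exact ⟨⟨q, hq⟩, by rw [hinf]; exact ENNReal.ofReal_lt_top⟩
      · have hlt : s < (g x).toReal := (ENNReal.ofReal_lt_iff_lt_toReal hs hfin).mp hx
        obtain ⟨q, hq1, hq2⟩ := exists_rat_btwn hlt
        refine ⟨⟨q, hq1⟩, ?_⟩
        exact (ENNReal.ofReal_lt_iff_lt_toReal (le_of_lt (lt_of_le_of_lt hs hq1)) hfin).mpr hq2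
    · rintro ⟨⟨q, hq1⟩, hq2⟩
      exact lt_of_le_of_lt (ENNReal.ofReal_le_ofReal hq1.le) hq2
  -- equal distributions of h and g
  have hdisteq : ∀ s : ℝ, 0 ≤ s →
      P {x | ENNReal.ofReal s < h x} = P {x | ENNReal.ofReal s < g x} := by
    intro s hs
    rw [hdist s hs, hdistg s hs]
    have hd1 : Directed (· ⊆ ·)
        (fun q : {q : ℚ // s < (q:ℝ)} => {x | cX ((q:ℚ):ℝ) < TX x}) := by
      rintro ⟨q1, h1⟩ ⟨q2, h2⟩
      refine ⟨⟨min q1 q2, by push_cast; exact lt_min h1 h2⟩, fun x hx => ?_, fun x hx => ?_⟩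
      · exact lt_of_le_of_lt (hcXmono (by push_cast; exact min_le_left _ _)) hx
      · exact lt_of_le_of_lt (hcXmono (by push_cast; exact min_le_right _ _)) hx
    have hd2 : Directed (· ⊆ ·)
        (fun q : {q : ℚ // s < (q:ℝ)} => {x | ENNReal.ofReal ((q:ℚ):ℝ) < g x}) := by
      rintro ⟨q1, h1⟩ ⟨q2, h2⟩
      refine ⟨⟨min q1 q2, by push_cast; exact lt_min h1 h2⟩, fun x hx => ?_, fun x hx => ?_⟩
      · exact lt_of_le_of_lt (ENNReal.ofReal_le_ofReal (by push_cast; exact min_le_left _ _)) hx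
      · exact lt_of_le_of_lt (ENNReal.ofReal_le_ofReal (by push_cast; exact min_le_right _ _)) hx
    rw [hd1.measure_iUnion, hd2.measure_iUnion]
    exact iSup_congr fun q => hPU _
  -- the rearranged measure
  set Q' : Measure (Θ × Θ) := P.withDensity h with hQ'def
  have hQ'ac : Q' ≪ P := withDensity_absolutelyContinuous _ _
  -- generic Fubini step
  have fub : ∀ w : Θ × Θ → ℝ≥0∞, Measurable w →
      ∫⁻ t in Set.Ioi (0:ℝ), ∫⁻ x in {x | cX t < TX x}, w x ∂P ∂volume
        = ∫⁻ x, w x * h x ∂P := by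
    intro w hw
    have hFm : Measurable (Function.uncurry
        (fun (t : ℝ) (x : Θ × Θ) =>
          Set.indicator {p : (Θ × Θ) × ℝ | cX p.2 < TX p.1} (fun p => w p.1) (x, t))) := by
      have h1 : Measurable (fun p : (Θ × Θ) × ℝ =>
          Set.indicator {p : (Θ × Θ) × ℝ | cX p.2 < TX p.1} (fun p => w p.1) p) :=
        (hw.comp measurable_fst).indicator hEm
      exact h1.comp (measurable_snd.prodMk measurable_fst)
    calc ∫⁻ t in Set.Ioi (0:ℝ), ∫⁻ x in {x | cX t < TX x}, w x ∂P ∂volume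
        = ∫⁻ t in Set.Ioi (0:ℝ), ∫⁻ x, Set.indicator {p : (Θ × Θ) × ℝ | cX p.2 < TX p.1}
            (fun p => w p.1) (x, t) ∂P ∂volume := by
          refine lintegral_congr fun t => ?_
          rw [← lintegral_indicator (measurableSet_lt measurable_const hTXm)]
          refine lintegral_congr fun x => ?_
          by_cases hx : cX t < TX x <;>
            simp [Set.indicator_apply, Set.mem_setOf_eq, hx]
      _ = ∫⁻ x, ∫⁻ t in Set.Ioi (0:ℝ), Set.indicator {p : (Θ × Θ) × ℝ | cX p.2 < TX p.1}
            (fun p => w p.1) (x, t) ∂volume ∂P := lintegral_lintegral_swap hFm.aemeasurable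
      _ = ∫⁻ x, w x * h x ∂P := by
          refine lintegral_congr fun x => ?_
          have hind : ∀ t : ℝ, Set.indicator {p : (Θ × Θ) × ℝ | cX p.2 < TX p.1}
              (fun p => w p.1) (x, t)
              = Set.indicator {t : ℝ | cX t < TX x} (fun _ => w x) t := by
            intro t
            by_cases hx : cX t < TX x <;>
              simp [Set.indicator_apply, Set.mem_setOf_eq, hx]
          calc ∫⁻ t in Set.Ioi (0:ℝ), Set.indicator {p : (Θ × Θ) × ℝ | cX p.2 < TX p.1}
                (fun p => w p.1) (x, t) ∂volume
              = ∫⁻ t in Set.Ioi (0:ℝ),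
                  Set.indicator {t : ℝ | cX t < TX x} (fun _ => w x) t ∂volume :=
                lintegral_congr hind
            _ = ∫⁻ t in {t : ℝ | cX t < TX x}, w x ∂(volume.restrict (Set.Ioi 0)) :=
                lintegral_indicator (hsecm x) _
            _ = w x * h x := by
                rw [setLIntegral_const, Measure.restrict_apply (hsecm x), ← hrestr x]
  -- total mass of h is 1
  have htoReal_set : ∀ (ν : Measure (Θ × Θ)), ν ≪ P → ∀ t : ℝ, 0 < t →
      ν {a | t < (g a).toReal} = ν {x | ENNReal.ofReal t < g x} := by
    intro ν hν t ht
    have hnull : ν {x | g x = ∞} = 0 := hν hginf_null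
    have hsub1 : {a | t < (g a).toReal} ⊆ {x | ENNReal.ofReal t < g x} := by
      intro a ha
      rcases eq_or_ne (g a) ∞ with hf | hf
      · simp only [Set.mem_setOf_eq, hf]; exact ENNReal.ofReal_lt_top
      · exact (ENNReal.ofReal_lt_iff_lt_toReal ht.le hf).mpr ha
    have hsub2 : {x | ENNReal.ofReal t < g x} ⊆ {a | t < (g a).toReal} ∪ {x | g x = ∞} := by
      intro a ha
      rcases eq_or_ne (g a) ∞ with hf | hf
      · exact Or.inr hf
      · exact Or.inl ((ENNReal.ofReal_lt_iff_lt_toReal ht.le hf).mp ha)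
    refine le_antisymm (measure_mono hsub1) ?_
    calc ν {x | ENNReal.ofReal t < g x} ≤ ν ({a | t < (g a).toReal} ∪ {x | g x = ∞}) :=
          measure_mono hsub2
      _ ≤ ν {a | t < (g a).toReal} + ν {x | g x = ∞} := measure_union_le _ _
      _ = ν {a | t < (g a).toReal} := by rw [hnull, add_zero]
  have hmass : ∫⁻ x, h x ∂P = 1 := by
    have e0 : ∫⁻ x, h x ∂P = ∫⁻ x, (1 : ℝ≥0∞) * h x ∂P :=
      lintegral_congr fun x => (one_mul _).symm
    have e1 : ∫⁻ t in Set.Ioi (0:ℝ), ∫⁻ x in {x | cX t < TX x}, (1:ℝ≥0∞) ∂P ∂volume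
        = ∫⁻ x, (1:ℝ≥0∞) * h x ∂P := fub 1 measurable_const
    have e2 : ∀ t : ℝ, t ∈ Set.Ioi (0:ℝ) →
        (∫⁻ _x in {x | cX t < TX x}, (1:ℝ≥0∞) ∂P) = P {a | t < (g a).toReal} := by
      intro t ht
      rw [setLIntegral_const, one_mul, hPU t, hmdef]
      exact (htoReal_set P Measure.AbsolutelyContinuous.rfl t ht).symm
    have e3 : ∫⁻ x, ENNReal.ofReal ((g x).toReal) ∂P
        = ∫⁻ t in Set.Ioi (0:ℝ), P {a | t < (g a).toReal} ∂volume :=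
      lintegral_eq_lintegral_meas_lt P (ae_of_all _ fun x => ENNReal.toReal_nonneg)
        hgm.ennreal_toReal.aemeasurable
    have e4 : ∫⁻ x, ENNReal.ofReal ((g x).toReal) ∂P = ∫⁻ x, g x ∂P := by
      refine lintegral_congr_ae ?_
      filter_upwards [hgfin] with x hx
      exact ENNReal.ofReal_toReal hx.ne
    have e5 : ∫⁻ x, g x ∂P = 1 := by
      rw [hgdef, Measure.lintegral_rnDeriv hQac]
      exact measure_univ
    rw [e0, ← e1, setLIntegral_congr_fun measurableSet_Ioi (fun t ht => e2 t ht), ← e3, e4, e5]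
  haveI hQ'prob : IsProbabilityMeasure Q' := by
    constructor
    rw [hQ'def, withDensity_apply _ MeasurableSet.univ, Measure.restrict_univ, hmass]
  -- Q' is a rearrangement of Q
  have hrear : IsRearrangement P Q Q' := by
    intro a
    have hh' : Q'.rnDeriv P =ᵐ[P] h := by
      rw [hQ'def]
      exact Measure.rnDeriv_withDensity P hhm
    have hset1 : P {ω | Q'.rnDeriv P ω ≤ a} = P {ω | h ω ≤ a} := by
      refine measure_congr (hh'.mono fun x hx => ?_)
      change (Q'.rnDeriv P x ≤ a) = (h x ≤ a)
      rw [hx]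
    rw [hset1]
    show P {ω | h ω ≤ a} = P {ω | g ω ≤ a}
    rcases eq_or_ne a ∞ with ha | ha
    · have h1 : {ω | h ω ≤ a} = Set.univ := by
        ext ω; simp [ha]
      have h2 : {ω | g ω ≤ a} = Set.univ := by
        ext ω; simp [ha]
      rw [h1, h2]
    · have hc1 : {ω | h ω ≤ a} = {ω | a < h ω}ᶜ := by
        ext ω; simp [not_lt]
      have hc2 : {ω | g ω ≤ a} = {ω | a < g ω}ᶜ := by
        ext ω; simp [not_lt]
      rw [hc1, hc2, prob_compl_eq_one_sub (measurableSet_lt measurable_const hhm),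
        prob_compl_eq_one_sub (measurableSet_lt measurable_const hgm)]
      congr 1
      have := hdisteq a.toReal ENNReal.toReal_nonneg
      rwa [ENNReal.ofReal_toReal ha] at this
  have hQ'mem : Q' ∈ 𝒬 := hinv Q hQ Q' hQ'prob hQ'ac hrear
  -- the finite measure with density TY'
  set μY : Measure (Θ × Θ) := P.withDensity TY' with hμYdef
  haveI : IsFiniteMeasure μY := by
    constructor
    rw [hμYdef, withDensity_apply _ MeasurableSet.univ, Measure.restrict_univ]
    calc ∫⁻ x, TY' x ∂P ≤ ∫⁻ _x, ENNReal.ofReal (2*M₀) ∂P :=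
          lintegral_mono fun x => ENNReal.ofReal_le_ofReal (hTYB x)
      _ = ENNReal.ofReal (2*M₀) := by simp
      _ < ∞ := ENNReal.ofReal_lt_top
  have hμYac : μY ≪ P := withDensity_absolutelyContinuous _ _
  -- step A : disintegrate ∫ TY' dQ along the level sets of g
  have hQeq : Q = P.withDensity g := (Measure.withDensity_rnDeriv_eq Q P hQac).symm
  have stepA : ∫⁻ x, TY' x ∂Q
      = ∫⁻ t in Set.Ioi (0:ℝ), ∫⁻ x in {x | ENNReal.ofReal t < g x}, TY' x ∂P ∂volume := by
    have e1 : ∫⁻ x, TY' x ∂Q = ∫⁻ x, g x ∂μY := by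
      rw [hQeq, lintegral_withDensity_eq_lintegral_mul P hgm hTY'm, hμYdef,
        lintegral_withDensity_eq_lintegral_mul P hTY'm hgm]
      exact lintegral_congr fun x => mul_comm _ _
    have e2 : ∫⁻ x, g x ∂μY = ∫⁻ x, ENNReal.ofReal ((g x).toReal) ∂μY := by
      refine lintegral_congr_ae ?_
      filter_upwards [hμYac.ae_le hgfin] with x hx
      exact (ENNReal.ofReal_toReal hx.ne).symm
    have e3 : ∫⁻ x, ENNReal.ofReal ((g x).toReal) ∂μY
        = ∫⁻ t in Set.Ioi (0:ℝ), μY {a | t < (g a).toReal} ∂volume :=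
      lintegral_eq_lintegral_meas_lt μY (ae_of_all _ fun x => ENNReal.toReal_nonneg)
        hgm.ennreal_toReal.aemeasurable
    have e4 : ∀ t : ℝ, t ∈ Set.Ioi (0:ℝ) →
        μY {a | t < (g a).toReal} = ∫⁻ x in {x | ENNReal.ofReal t < g x}, TY' x ∂P := by
      intro t ht
      rw [htoReal_set μY hμYac t ht, hμYdef, withDensity_apply _ (hgsetm t)]
    rw [e1, e2, e3, setLIntegral_congr_fun measurableSet_Ioi (fun t ht => e4 t ht)]
  -- the pointwise chain of inequalities
  have chain : ∀ t : ℝ, ∫⁻ x in {x | ENNReal.ofReal t < g x}, TY' x ∂P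
      ≤ ∫⁻ x in {x | cX t < TX x}, TX' x ∂P := by
    intro t
    have h1 : ∫⁻ x in {x | ENNReal.ofReal t < g x}, TY' x ∂P
        ≤ ∫⁻ x in {x | cY t < TY x}, TY' x ∂P :=
      Stmt11Aux.hl_swap P hTYm (hgsetm t) (cY t) (by rw [hPV t])
    have h2 := hupV (cY t)
    have h3 : ∫⁻ x in {x | cY t < TY x}, TX' x ∂P
        ≤ ∫⁻ x in {x | cX t < TX x}, TX' x ∂P :=
      Stmt11Aux.hl_swap P hTXm (measurableSet_lt measurable_const hTYm) (cX t)
        (by rw [hPU t, hPV t])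
    exact le_trans h1 (le_trans h2 h3)
  -- put everything together
  have main : ∫⁻ x, TY' x ∂Q ≤ ∫⁻ x, TX' x ∂Q' := by
    calc ∫⁻ x, TY' x ∂Q
        = ∫⁻ t in Set.Ioi (0:ℝ), ∫⁻ x in {x | ENNReal.ofReal t < g x}, TY' x ∂P ∂volume :=
          stepA
      _ ≤ ∫⁻ t in Set.Ioi (0:ℝ), ∫⁻ x in {x | cX t < TX x}, TX' x ∂P ∂volume :=
          lintegral_mono fun t => chain t
      _ = ∫⁻ x, TX' x * h x ∂P := fub TX' hTX'm
      _ = ∫⁻ x, TX' x ∂Q' := by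
          rw [hQ'def, lintegral_withDensity_eq_lintegral_mul P hhm hTX'm]
          exact lintegral_congr fun x => mul_comm _ _
  calc ∫⁻ x, TY' x ∂Q ≤ ∫⁻ x, TX' x ∂Q' := main
    _ ≤ ⨆ Q ∈ 𝒬, ∫⁻ x, TX' x ∂Q :=
      le_iSup₂ (f := fun (Q : Measure (Θ × Θ)) (_ : Q ∈ 𝒬) => ∫⁻ x, TX' x ∂Q) Q' hQ'mem

end
end

section
/- Let μ be a finite measure on [0,1], let g : [0,1] → ℝ be a bounded measurable function for which there exists θ̂ ∈ [0,1] such that g(θ') ≥ 0 for all θ' < θ̂ and g(θ') ≤ 0 for all θ' > θ̂, with ∫_{[0,1]} g dμ ≥ 0, and let q : [0,1] → [0,∞) be a bounded nonincreasing measurable function. Then ∫_{[0,1]} g·q dμ ≥ 0. -/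
open MeasureTheory

noncomputable section

/-!
Replacing the weight `q` by the constant `q θ̂` can only lower the integrand: left of `θ̂` we have
`g ≥ 0` and `q ≥ q θ̂`, right of it `g ≤ 0` and `q ≤ q θ̂`. Hence
`∫ g q ≥ q θ̂ ∫ g ≥ 0`.
-/

section SingleCrossing

variable {α : Type*} [LinearOrder α] {g q : α → ℝ} {θ : α}

theorem mul_le_mul_of_singleCrossing (hg_pos : ∀ x, x < θ → 0 ≤ g x)
    (hg_neg : ∀ x, θ < x → g x ≤ 0) (hq : Antitone q) (x : α) :
    g x * q θ ≤ g x * q x := by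
  rcases lt_trichotomy x θ with hx | rfl | hx
  · exact mul_le_mul_of_nonneg_left (hq hx.le) (hg_pos x hx)
  · exact le_rfl
  · exact mul_le_mul_of_nonpos_left (hq hx.le) (hg_neg x hx)

theorem integral_mul_nonneg_of_singleCrossing [MeasurableSpace α] {μ : Measure α}
    (hg : Integrable g μ) (hg_pos : ∀ x, x < θ → 0 ≤ g x) (hg_neg : ∀ x, θ < x → g x ≤ 0)
    (hgint : 0 ≤ ∫ x, g x ∂μ) (hq : Antitone q) (hqθ : 0 ≤ q θ) :
    0 ≤ ∫ x, g x * q x ∂μ := by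
  by_cases hgq : Integrable (fun x => g x * q x) μ
  · calc 0 ≤ (∫ x, g x ∂μ) * q θ := mul_nonneg hgint hqθ
      _ = ∫ x, g x * q θ ∂μ := (integral_mul_const _ _).symm
      _ ≤ ∫ x, g x * q x ∂μ :=
        integral_mono (hg.mul_const _) hgq (mul_le_mul_of_singleCrossing hg_pos hg_neg hq)
  · rw [integral_undef hgq]

end SingleCrossing

theorem stmt12_general
    (μ : Measure Θ) [IsFiniteMeasure μ]
    (g : Θ → ℝ) (hgm : Measurable g) (hgbdd : ∃ M : ℝ, ∀ x, |g x| ≤ M)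
    -- g crosses zero at most once, from above
    (θh : Θ)
    (hg_pos : ∀ θ' : Θ, θ' < θh → 0 ≤ g θ')
    (hg_neg : ∀ θ' : Θ, θh < θ' → g θ' ≤ 0)
    (hgint : 0 ≤ ∫ x, g x ∂μ)
    (q : Θ → ℝ) (hq0 : ∀ x, 0 ≤ q x)
    -- q is nonincreasing
    (hq_anti : Antitone q) :
    0 ≤ ∫ x, g x * q x ∂μ := by
  obtain ⟨M, hM⟩ := hgbdd
  have hg : Integrable g μ :=
    .of_bound hgm.aestronglyMeasurable M (.of_forall fun x => (Real.norm_eq_abs _).trans_le (hM x))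
  exact integral_mul_nonneg_of_singleCrossing hg hg_pos hg_neg hgint hq_anti (hq0 θh)

theorem stmt12
    (μ : Measure Θ) [IsFiniteMeasure μ]
    (g : Θ → ℝ) (hgm : Measurable g) (hgbdd : ∃ M : ℝ, ∀ x, |g x| ≤ M)
    -- g crosses zero at most once, from above
    (θh : Θ)
    (hg_pos : ∀ θ' : Θ, θ' < θh → 0 ≤ g θ')
    (hg_neg : ∀ θ' : Θ, θh < θ' → g θ' ≤ 0)
    (hgint : 0 ≤ ∫ x, g x ∂μ)
    (q : Θ → ℝ) (hqm : Measurable q) (hq0 : ∀ x, 0 ≤ q x)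
    (hqbdd : ∃ M : ℝ, ∀ x, q x ≤ M)
    -- q is nonincreasing
    (hq_anti : Antitone q) :
    0 ≤ ∫ x, g x * q x ∂μ :=
  stmt12_general μ g hgm hgbdd θh hg_pos hg_neg hgint q hq0 hq_anti

end
end

section
/- Let f : [0,1] → (0,∞) be a continuous probability density with cdf F(θ) = ∫₀^θ f(z) dz satisfying F(θ) < 1 for θ < 1. Define the war-of-attrition and all-pay equilibrium bids b^W(θ) := ∫₀^θ z f(z)/(1−F(z)) dz and b^A(θ) := θF(θ) − ∫₀^θ F(z)dz. Then b^W(θ) > b^A(θ) for every θ ∈ (0,1). -/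
/-!
Integrating by parts, the all-pay bid is `b^A(θ) = ∫₀^θ z f(z) dz`. On `(0, θ]` we have
`0 < F < 1`, so the war-of-attrition integrand `z f(z) / (1 - F(z))` strictly exceeds `z f(z)`
there, and both integrands are continuous on `[0, θ]`.
-/

open MeasureTheory intervalIntegral Set

theorem integral_id_mul_eq_mul_integral_sub_integral_primitive {f : ℝ → ℝ} {a b : ℝ}
    (hab : a ≤ b) (hf : ContinuousOn f (Icc a b)) :
    ∫ x in a..b, x * f x = b * (∫ x in a..b, f x) - ∫ x in a..b, ∫ z in a..x, f z := by
  have hfi : IntegrableOn f (uIcc a b) := by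
    rw [uIcc_of_le hab]
    exact hf.integrableOn_Icc
  have hF_deriv : ∀ x ∈ Ioo (min a b) (max a b),
      HasDerivAt (fun x => ∫ z in a..x, f z) (f x) x := by
    rw [min_eq_left hab, max_eq_right hab]
    intro x hx
    exact integral_hasDerivAt_right
      ((hf.mono (Icc_subset_Icc_right hx.2.le)).intervalIntegrable_of_Icc hx.1.le)
      ((hf.mono Ioo_subset_Icc_self).stronglyMeasurableAtFilter isOpen_Ioo _ hx)
      (hf.continuousAt (Icc_mem_nhds hx.1 hx.2))
  simpa using integral_mul_deriv_eq_deriv_mul_of_hasDerivAt continuousOn_id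
    (continuousOn_primitive_interval hfi) (fun x _ => hasDerivAt_id x) hF_deriv
    intervalIntegrable_const hfi.intervalIntegrable

theorem lt_div_one_sub {x c : ℝ} (hx : 0 < x) (hc0 : 0 < c) (hc1 : c < 1) :
    x < x / (1 - c) := by
  rw [lt_div_iff₀ (sub_pos.2 hc1)]
  nlinarith

theorem stmt15
    (f : ℝ → ℝ)
    (hf_cont : ContinuousOn f (Set.Icc 0 1))
    (hf_pos : ∀ z ∈ Set.Icc (0:ℝ) 1, 0 < f z)
    (F : ℝ → ℝ) (hF : ∀ θ : ℝ, F θ = ∫ z in (0:ℝ)..θ, f z)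
    (hFlt : ∀ θ : ℝ, 0 ≤ θ → θ < 1 → F θ < 1)
    (bW bA : ℝ → ℝ)
    (hbW : ∀ θ : ℝ, bW θ = ∫ z in (0:ℝ)..θ, z * f z / (1 - F z))
    (hbA : ∀ θ : ℝ, bA θ = θ * F θ - ∫ z in (0:ℝ)..θ, F z) :
    ∀ θ ∈ Set.Ioo (0:ℝ) 1, bA θ < bW θ := by
  obtain rfl := funext hbW
  obtain rfl := funext hbA
  obtain rfl : F = fun θ => ∫ z in (0:ℝ)..θ, f z := funext hF
  rintro θ ⟨hθ0, hθ1⟩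
  have hf : ContinuousOn f (Icc 0 θ) := hf_cont.mono (Icc_subset_Icc_right hθ1.le)
  have hF_pos : ∀ z ∈ Ioc 0 θ, 0 < ∫ x in (0:ℝ)..z, f x := fun z hz =>
    intervalIntegral_pos_of_pos_on
      ((hf.mono (Icc_subset_Icc_right hz.2)).intervalIntegrable_of_Icc hz.1.le)
      (fun x hx => hf_pos x ⟨hx.1.le, hx.2.le.trans (hz.2.trans hθ1.le)⟩) hz.1
  have hF_lt_one : ∀ z ∈ Icc 0 θ, (∫ x in (0:ℝ)..z, f x) < 1 := fun z hz =>
    hFlt z hz.1 (hz.2.trans_lt hθ1)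
  have hlt : ∀ z ∈ Ioc 0 θ, z * f z < z * f z / (1 - ∫ x in (0:ℝ)..z, f x) := fun z hz =>
    lt_div_one_sub (mul_pos hz.1 (hf_pos z ⟨hz.1.le, hz.2.trans hθ1.le⟩)) (hF_pos z hz)
      (hF_lt_one z (Ioc_subset_Icc_self hz))
  have hF_cont : ContinuousOn (fun z => ∫ x in (0:ℝ)..z, f x) (Icc 0 θ) := by
    simpa [uIcc_of_le hθ0.le] using continuousOn_primitive_interval (a := 0) (b := θ)
      (by simpa [uIcc_of_le hθ0.le] using hf.integrableOn_Icc)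
  beta_reduce
  rw [← integral_id_mul_eq_mul_integral_sub_integral_primitive hθ0.le hf]
  exact integral_lt_integral_of_continuousOn_of_le_of_exists_lt hθ0 (continuousOn_id.mul hf)
    ((continuousOn_id.mul hf).div (continuousOn_const.sub hF_cont)
      fun z hz => (sub_pos.2 (hF_lt_one z hz)).ne')
    (fun z hz => (hlt z hz).le) ⟨θ, right_mem_Icc.2 hθ0.le, hlt θ (right_mem_Ioc.2 hθ0)⟩
end

section
/- Let f : (0,1) → (0,∞) be continuous with F(θ) := ∫₀^θ f(z) dz satisfying F(θ) < 1 for all θ ∈ (0,1). If the function θ ↦ θ·f(θ)/(1−F(θ)) is nondecreasing on (0,1), then lim_{θ → 0⁺} θ·f(θ)/(1−F(θ)) = 0. -/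
/-!
Near `0` the distribution function `F` is small, so the hazard rate `g θ = θ f θ / (1 - F θ)` is
nonnegative there, and being monotone it converges as `θ → 0⁺` to its infimum. If that infimum
were some `ε > 0`, then near `0` we would have `f θ ≥ ε (1 - F θ) / θ ≥ (ε / 2) / θ`, and `f`
could not be integrable at `0`, since `∫ dθ / θ = log θ` diverges there.
-/

open MeasureTheory Filter Set Topology Asymptotics

theorem MonotoneOn.tendsto_nhdsGT_of_eventually_le {α β : Type*} [LinearOrder α]
    [TopologicalSpace α] [OrderTopology α] [LinearOrder β] [TopologicalSpace β] [OrderTopology β]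
    {g : α → β} {a b : α} {L : β} (hg : MonotoneOn g (Ioo a b))
    (hL : ∀ᶠ x in 𝓝[>] a, L ≤ g x) (hsmall : ∀ u > L, ∃ x ∈ Ioo a b, g x < u) :
    Tendsto g (𝓝[>] a) (𝓝 L) := by
  refine tendsto_order.2 ⟨fun l hl => hL.mono fun x hx => hl.trans_le hx, fun u hu => ?_⟩
  obtain ⟨x, hx, hgx⟩ := hsmall u hu
  filter_upwards [Ioo_mem_nhdsGT hx.1] with y hy
  exact (hg ⟨hy.1, hy.2.trans hx.2⟩ hx hy.2.le).trans_lt hgx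

theorem tendsto_integral_nhdsGT {E : Type*} [NormedAddCommGroup E] [NormedSpace ℝ E]
    {f : ℝ → E} {a b : ℝ} (hab : a < b) (hf : IntervalIntegrable f volume a b) :
    Tendsto (fun x => ∫ t in a..x, f t) (𝓝[>] a) (𝓝 0) := by
  have hcont := intervalIntegral.continuousOn_primitive_interval' hf left_mem_uIcc a left_mem_uIcc
  rw [← intervalIntegral.integral_same (f := f) (a := a)]
  refine hcont.mono_of_mem_nhdsWithin (mem_of_superset (Ioo_mem_nhdsGT hab) ?_)
  exact Ioo_subset_Icc_self.trans Icc_subset_uIcc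

theorem not_intervalIntegrable_of_inv_isBigO_nhdsGT {E : Type*} [NormedAddCommGroup E]
    {f : ℝ → E} {b : ℝ} (hb : 0 < b) (hf : (fun x => x⁻¹) =O[𝓝[>] 0] f) :
    ¬IntervalIntegrable f volume 0 b := by
  refine not_intervalIntegrable_of_tendsto_norm_atTop_of_deriv_isBigO_filter (f := Real.log)
    (𝓝[>] 0) ?_ ?_ (tendsto_abs_atBot_atTop.comp Real.tendsto_log_nhdsGT_zero)
    (by rwa [Real.deriv_log'])
  · exact mem_of_superset (Ioo_mem_nhdsGT hb) (Ioo_subset_Icc_self.trans Icc_subset_uIcc)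
  · filter_upwards [self_mem_nhdsWithin] with x hx
    exact Real.differentiableAt_log (ne_of_gt hx)

theorem stmt16_general
    (f : ℝ → ℝ)
    (hf_pos : ∀ z ∈ Set.Ioo (0:ℝ) 1, 0 < f z)
    -- F(θ) = ∫₀^θ f is well defined
    (hfint : ∀ θ ∈ Set.Ioo (0:ℝ) 1, IntervalIntegrable f volume 0 θ)
    (F : ℝ → ℝ) (hF : ∀ θ : ℝ, F θ = ∫ z in (0:ℝ)..θ, f z)
    -- the type-weighted hazard rate is nondecreasing on (0,1)
    (hmono : MonotoneOn (fun θ : ℝ => θ * f θ / (1 - F θ)) (Set.Ioo 0 1)) :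
    Tendsto (fun θ : ℝ => θ * f θ / (1 - F θ)) (nhdsWithin 0 (Set.Ioo 0 1)) (nhds 0) := by
  have hhalf : (1 / 2 : ℝ) ∈ Ioo 0 1 := by norm_num
  have hF_small : ∀ᶠ θ in 𝓝[>] 0, F θ < 1 / 2 := by
    have := tendsto_integral_nhdsGT hhalf.1 (hfint _ hhalf)
    rw [← funext hF] at this
    exact this.eventually (gt_mem_nhds one_half_pos)
  have hnear : ∀ᶠ θ in 𝓝[>] 0, θ ∈ Ioo 0 1 ∧ F θ < 1 / 2 :=
    Eventually.and (Ioo_mem_nhdsGT one_pos) hF_small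
  rw [nhdsWithin_Ioo_eq_nhdsGT one_pos]
  refine hmono.tendsto_nhdsGT_of_eventually_le ?_ fun ε hε => ?_
  · filter_upwards [hnear] with θ ⟨hθ, hFθ⟩
    exact div_nonneg (mul_nonneg hθ.1.le (hf_pos θ hθ).le) (by linarith)
  · by_contra! hlarge
    refine not_intervalIntegrable_of_inv_isBigO_nhdsGT hhalf.1 ?_ (hfint _ hhalf)
    refine IsBigO.of_bound (2 / ε) ?_
    filter_upwards [hnear] with θ ⟨hθ, hFθ⟩
    have hrate := (le_div_iff₀ (by linarith : (0 : ℝ) < 1 - F θ)).1 (hlarge θ hθ)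
    rw [Real.norm_of_nonneg (inv_nonneg.2 hθ.1.le), Real.norm_of_nonneg (hf_pos θ hθ).le,
      inv_le_iff_one_le_mul₀' hθ.1, div_mul_eq_mul_div, mul_div_assoc', le_div_iff₀ hε]
    nlinarith

theorem stmt16
    (f : ℝ → ℝ)
    (hf_cont : ContinuousOn f (Set.Ioo 0 1))
    (hf_pos : ∀ z ∈ Set.Ioo (0:ℝ) 1, 0 < f z)
    -- F(θ) = ∫₀^θ f is well defined
    (hfint : ∀ θ ∈ Set.Ioo (0:ℝ) 1, IntervalIntegrable f volume 0 θ)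
    (F : ℝ → ℝ) (hF : ∀ θ : ℝ, F θ = ∫ z in (0:ℝ)..θ, f z)
    (hFlt : ∀ θ ∈ Set.Ioo (0:ℝ) 1, F θ < 1)
    -- the type-weighted hazard rate is nondecreasing on (0,1)
    (hmono : MonotoneOn (fun θ : ℝ => θ * f θ / (1 - F θ)) (Set.Ioo 0 1)) :
    Tendsto (fun θ : ℝ => θ * f θ / (1 - F θ)) (nhdsWithin 0 (Set.Ioo 0 1)) (nhds 0) :=
  stmt16_general f hf_pos hfint F hF hmono
end

section
/- Let f : [0,1] → (0,∞) be a continuous probability density with cdf F(θ) = ∫₀^θ f(z) dz satisfying F(1) = 1 and F(θ) < 1 for θ < 1, and assume θ ↦ θ·f(θ)/(1−F(θ)) is nondecreasing on (0,1). Define b^W(θ) := ∫₀^θ z f(z)/(1−F(z)) dz. Then there exists θ* ∈ (0,1) such that b^W(θ) ≤ θ for all θ ∈ [0,θ*] and b^W(θ) ≥ θ for all θ ∈ [θ*,1). -/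
open MeasureTheory

noncomputable section

theorem stmt17
    (f : ℝ → ℝ)
    (hf_cont : ContinuousOn f (Set.Icc 0 1))
    (hf_pos : ∀ z ∈ Set.Icc (0:ℝ) 1, 0 < f z)
    (F : ℝ → ℝ) (hF : ∀ θ : ℝ, F θ = ∫ z in (0:ℝ)..θ, f z)
    (hF1 : F 1 = 1)
    (hFlt : ∀ θ : ℝ, 0 ≤ θ → θ < 1 → F θ < 1)
    -- the type-weighted hazard rate is nondecreasing on (0,1)
    (hmono : MonotoneOn (fun θ : ℝ => θ * f θ / (1 - F θ)) (Set.Ioo 0 1))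
    (bW : ℝ → ℝ)
    (hbW : ∀ θ : ℝ, bW θ = ∫ z in (0:ℝ)..θ, z * f z / (1 - F z)) :
    ∃ θs ∈ Set.Ioo (0:ℝ) 1,
      (∀ θ ∈ Set.Icc (0:ℝ) θs, bW θ ≤ θ) ∧ (∀ θ ∈ Set.Ico θs (1:ℝ), θ ≤ bW θ) := by
  have h01 : (0:ℝ) ≤ 1 := zero_le_one
  have hFfun : F = fun θ : ℝ => ∫ z in (0:ℝ)..θ, f z := funext hF
  set h : ℝ → ℝ := fun z => z * f z / (1 - F z) with hhdef
  have hbWfun : bW = fun θ : ℝ => ∫ z in (0:ℝ)..θ, h z := funext hbW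
  -- interval integrability of f on subintervals of [0,1]
  have hf_ii : ∀ a b : ℝ, 0 ≤ a → a ≤ b → b ≤ 1 → IntervalIntegrable f volume a b := by
    intro a b ha hab hb
    exact (hf_cont.mono (Set.Icc_subset_Icc ha hb)).intervalIntegrable_of_Icc hab
  -- F is continuous on [0,1]
  have hFcont : ContinuousOn F (Set.Icc (0:ℝ) 1) := by
    rw [hFfun]
    have h1 : IntegrableOn f (Set.uIcc (0:ℝ) 1) := by
      rw [Set.uIcc_of_le h01]; exact hf_cont.integrableOn_Icc
    have := intervalIntegral.continuousOn_primitive_interval (μ := volume) h1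
    rwa [Set.uIcc_of_le h01] at this
  -- F is monotone
  have hFmono : ∀ a b : ℝ, 0 ≤ a → a ≤ b → b ≤ 1 → F a ≤ F b := by
    intro a b ha hab hb
    have hsplit : (∫ z in (0:ℝ)..a, f z) + ∫ z in a..b, f z = ∫ z in (0:ℝ)..b, f z :=
      intervalIntegral.integral_add_adjacent_intervals (hf_ii 0 a le_rfl ha (le_trans hab hb))
        (hf_ii a b ha hab hb)
    have hnn : 0 ≤ ∫ z in a..b, f z :=
      intervalIntegral.integral_nonneg hab fun u hu =>
        (hf_pos u ⟨le_trans ha hu.1, le_trans hu.2 hb⟩).le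
    rw [hF a, hF b]
    linarith [hsplit, hnn]
  -- positivity of 1 - F on [0,1)
  have hFden : ∀ x : ℝ, 0 ≤ x → x < 1 → 0 < 1 - F x := by
    intro x hx0 hx1
    have := hFlt x hx0 hx1; linarith
  -- continuity of h on [0,1)
  have hhcont : ContinuousOn h (Set.Ico (0:ℝ) 1) := by
    apply ContinuousOn.div
    · exact continuousOn_id.mul (hf_cont.mono Set.Ico_subset_Icc_self)
    · exact continuousOn_const.sub (hFcont.mono Set.Ico_subset_Icc_self)
    · intro z hz; exact ne_of_gt (hFden z hz.1 hz.2)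
  have hhnn : ∀ x ∈ Set.Ico (0:ℝ) 1, 0 ≤ h x := by
    intro x hx
    exact div_nonneg (mul_nonneg hx.1 (hf_pos x ⟨hx.1, hx.2.le⟩).le) (hFden x hx.1 hx.2).le
  -- interval integrability of h
  have hh_ii : ∀ a b : ℝ, 0 ≤ a → a ≤ b → b < 1 → IntervalIntegrable h volume a b := by
    intro a b ha hab hb
    refine (hhcont.mono ?_).intervalIntegrable_of_Icc hab
    intro z hz; exact ⟨le_trans ha hz.1, lt_of_le_of_lt hz.2 hb⟩
  -- derivative of bW
  have hbWderiv : ∀ x ∈ Set.Ioo (0:ℝ) 1, HasDerivAt bW (h x) x := by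
    intro x hx
    rw [hbWfun]
    exact intervalIntegral.integral_hasDerivAt_right (hh_ii 0 x le_rfl hx.1.le hx.2)
      ((hhcont.mono Set.Ioo_subset_Ico_self).stronglyMeasurableAtFilter isOpen_Ioo x hx)
      (hhcont.continuousAt (Ico_mem_nhds hx.1 hx.2))
  -- continuity of bW on [0,r] for r < 1
  have hbWcont : ∀ r : ℝ, 0 ≤ r → r < 1 → ContinuousOn bW (Set.Icc 0 r) := by
    intro r hr0 hr1
    rw [hbWfun]
    have h1 : IntegrableOn h (Set.uIcc (0:ℝ) r) := by
      rw [Set.uIcc_of_le hr0]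
      exact (hhcont.mono (fun z hz => ⟨hz.1, lt_of_le_of_lt hz.2 hr1⟩)).integrableOn_Icc
    have := intervalIntegral.continuousOn_primitive_interval (μ := volume) h1
    rwa [Set.uIcc_of_le hr0] at this
  -- the gap function
  set g : ℝ → ℝ := fun θ => bW θ - θ with hgdef
  have hg0 : g 0 = 0 := by
    have : bW 0 = 0 := by rw [hbW]; simp
    simp [hgdef, this]
  have hgderiv : ∀ x ∈ Set.Ioo (0:ℝ) 1, HasDerivAt g (h x - 1) x := by
    intro x hx
    exact (hbWderiv x hx).sub (hasDerivAt_id x)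
  -- convexity of g on [0,r]
  have hconv : ∀ r : ℝ, 0 < r → r < 1 → ConvexOn ℝ (Set.Icc 0 r) g := by
    intro r hr0 hr1
    have hIi : interior (Set.Icc (0:ℝ) r) = Set.Ioo 0 r := interior_Icc
    refine MonotoneOn.convexOn_of_deriv (convex_Icc 0 r)
      ((hbWcont r hr0.le hr1).sub continuousOn_id) ?_ ?_
    · rw [hIi]
      intro x hx
      exact ((hgderiv x ⟨hx.1, hx.2.trans hr1⟩).differentiableAt).differentiableWithinAt
    · rw [hIi]
      intro a ha b hb hab
      have ha' : a ∈ Set.Ioo (0:ℝ) 1 := ⟨ha.1, ha.2.trans hr1⟩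
      have hb' : b ∈ Set.Ioo (0:ℝ) 1 := ⟨hb.1, hb.2.trans hr1⟩
      rw [(hgderiv a ha').deriv, (hgderiv b hb').deriv]
      have := hmono ha' hb' hab
      simpa [hhdef] using sub_le_sub_right this 1
  -- bound for f
  obtain ⟨zC, hzC_mem, hzC⟩ := isCompact_Icc.exists_isMaxOn (Set.nonempty_Icc.2 h01) hf_cont
  set C := f zC with hCdef
  have hCpos : 0 < C := hf_pos zC hzC_mem
  have hc : 0 < 1 - F (1/2) := hFden (1/2) (by norm_num) (by norm_num)
  set c := 1 - F (1/2) with hcdef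
  -- small δ where g δ < 0
  set δ := min (1/2 : ℝ) (c / (2 * C)) with hδdef
  have hδpos : 0 < δ := lt_min (by norm_num) (div_pos hc (by positivity))
  have hδhalf : δ ≤ 1/2 := min_le_left _ _
  have hδ1 : δ < 1 := lt_of_le_of_lt hδhalf (by norm_num)
  have hbound : ∀ z ∈ Set.Icc (0:ℝ) δ, h z ≤ 1/2 := by
    intro z hz
    have hz0 : 0 ≤ z := hz.1
    have hz1 : z ≤ 1/2 := hz.2.trans hδhalf
    have hfz : f z ≤ C := hzC ⟨hz0, by linarith⟩
    have hden : c ≤ 1 - F z := by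
      have := hFmono z (1/2) hz0 hz1 (by norm_num)
      simp only [hcdef]; linarith
    have h1 : z * f z ≤ δ * C := by
      apply mul_le_mul hz.2 hfz (hf_pos z ⟨hz0, by linarith⟩).le hδpos.le
    calc h z = z * f z / (1 - F z) := rfl
      _ ≤ δ * C / c := by
          apply div_le_div₀ (by positivity) h1 hc hden
      _ ≤ (c / (2 * C)) * C / c := by
          gcongr
          exact min_le_right _ _
      _ = 1/2 := by field_simp
  have hgδ : g δ < 0 := by
    have hint : (∫ z in (0:ℝ)..δ, h z) ≤ ∫ z in (0:ℝ)..δ, (1/2 : ℝ) :=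
      intervalIntegral.integral_mono_on hδpos.le (hh_ii 0 δ le_rfl hδpos.le hδ1)
        intervalIntegrable_const hbound
    have hconst : (∫ z in (0:ℝ)..δ, (1/2 : ℝ)) = δ * (1/2) := by simp
    have hbWδ : bW δ ≤ δ * (1/2) := by rw [hbW]; rw [hconst] at hint; exact hint
    show bW δ - δ < 0
    linarith
  -- derivative of -log(1-F)
  have hFderiv : ∀ x ∈ Set.Ioo (0:ℝ) 1, HasDerivAt F (f x) x := by
    intro x hx
    rw [hFfun]
    exact intervalIntegral.integral_hasDerivAt_right (hf_ii 0 x le_rfl hx.1.le hx.2.le)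
      ((hf_cont.mono Set.Ioo_subset_Icc_self).stronglyMeasurableAtFilter isOpen_Ioo x hx)
      (hf_cont.continuousAt (Icc_mem_nhds hx.1 hx.2))
  have hφderiv : ∀ x ∈ Set.Ioo (0:ℝ) 1,
      HasDerivAt (fun z => -Real.log (1 - F z)) (f x / (1 - F x)) x := by
    intro x hx
    have h1 : HasDerivAt (fun z => 1 - F z) (0 - f x) x :=
      (hasDerivAt_const x (1:ℝ)).sub (hFderiv x hx)
    have hne : 1 - F x ≠ 0 := ne_of_gt (hFden x hx.1.le hx.2)
    have h2 := (h1.log hne).neg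
    convert h2 using 1
    · rfl
    · rfl
    · rfl
    · ring
  -- continuity of the hazard rate denominator function
  have hψcont : ContinuousOn (fun z => f z / (1 - F z)) (Set.Ico (0:ℝ) 1) := by
    apply ContinuousOn.div
    · exact hf_cont.mono Set.Ico_subset_Icc_self
    · exact continuousOn_const.sub (hFcont.mono Set.Ico_subset_Icc_self)
    · intro z hz; exact ne_of_gt (hFden z hz.1 hz.2)
  have hψ_ii : ∀ b : ℝ, (1/2:ℝ) ≤ b → b < 1 →
      IntervalIntegrable (fun z => f z / (1 - F z)) volume (1/2) b := by
    intro b hb1 hb2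
    refine (hψcont.mono ?_).intervalIntegrable_of_Icc hb1
    intro z hz; exact ⟨le_trans (by norm_num) hz.1, lt_of_le_of_lt hz.2 hb2⟩
  -- find θ₁ close to 1 with g θ₁ > 0
  have hθ₁ex : ∃ θ₁ : ℝ, θ₁ ∈ Set.Ico (1/2:ℝ) 1 ∧ 1 - F θ₁ < c * Real.exp (-4) := by
    have htend : Filter.Tendsto F (nhdsWithin 1 (Set.Ico (1/2:ℝ) 1)) (nhds 1) := by
      have h1 : Filter.Tendsto F (nhdsWithin 1 (Set.Icc (0:ℝ) 1)) (nhds (F 1)) :=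
        hFcont.continuousWithinAt (by norm_num)
      rw [hF1] at h1
      exact h1.mono_left (nhdsWithin_mono 1 (fun x hx => ⟨le_trans (by norm_num) hx.1, hx.2.le⟩))
    have hne : (nhdsWithin (1:ℝ) (Set.Ico (1/2:ℝ) 1)).NeBot := by
      rw [← mem_closure_iff_nhdsWithin_neBot, closure_Ico (by norm_num : (1/2:ℝ) ≠ 1)]
      exact Set.right_mem_Icc.2 (by norm_num)
    have hev : ∀ᶠ x in nhdsWithin (1:ℝ) (Set.Ico (1/2:ℝ) 1), 1 - c * Real.exp (-4) < F x :=
      htend.eventually (eventually_gt_nhds (by have := Real.exp_pos (-4:ℝ); nlinarith))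
    obtain ⟨x, hx1, hx2⟩ := (hev.and self_mem_nhdsWithin).exists
    exact ⟨x, hx2, by linarith⟩
  obtain ⟨θ₁, hθ₁mem, hθ₁F⟩ := hθ₁ex
  have hθ₁half : (1/2:ℝ) ≤ θ₁ := hθ₁mem.1
  have hθ₁lt : θ₁ < 1 := hθ₁mem.2
  have hθ₁pos : 0 < θ₁ := lt_of_lt_of_le (by norm_num) hθ₁half
  have hgθ₁ : 0 < g θ₁ := by
    have hpos : 0 < 1 - F θ₁ := hFden θ₁ (by linarith) hθ₁lt
    have hlog : Real.log (1 - F θ₁) < Real.log c - 4 := by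
      have := Real.log_lt_log hpos hθ₁F
      rwa [Real.log_mul (ne_of_gt hc) (Real.exp_ne_zero _), Real.log_exp] at this
    have hsub : ∀ x ∈ Set.uIcc (1/2:ℝ) θ₁, x ∈ Set.Ioo (0:ℝ) 1 := by
      rw [Set.uIcc_of_le hθ₁half]
      intro x hx
      exact ⟨lt_of_lt_of_le (by norm_num) hx.1, lt_of_le_of_lt hx.2 hθ₁lt⟩
    have hint_eq : (∫ z in (1/2:ℝ)..θ₁, f z / (1 - F z))
        = (-Real.log (1 - F θ₁)) - (-Real.log (1 - F (1/2))) :=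
      intervalIntegral.integral_eq_sub_of_hasDerivAt
        (fun x hx => hφderiv x (hsub x hx)) (hψ_ii θ₁ hθ₁half hθ₁lt)
    have hmono_int : (∫ z in (1/2:ℝ)..θ₁, (1/2 : ℝ) * (f z / (1 - F z)))
        ≤ ∫ z in (1/2:ℝ)..θ₁, h z := by
      apply intervalIntegral.integral_mono_on hθ₁half
        ((hψ_ii θ₁ hθ₁half hθ₁lt).const_mul _)
        (hh_ii (1/2) θ₁ (by norm_num) hθ₁half hθ₁lt)
      intro x hx
      have hx0 : (0:ℝ) ≤ x := le_trans (by norm_num) hx.1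
      have hψnn : 0 ≤ f x / (1 - F x) :=
        div_nonneg (hf_pos x ⟨hx0, by linarith [hx.2]⟩).le
          (hFden x hx0 (lt_of_le_of_lt hx.2 hθ₁lt)).le
      calc (1/2 : ℝ) * (f x / (1 - F x)) ≤ x * (f x / (1 - F x)) :=
            mul_le_mul_of_nonneg_right hx.1 hψnn
        _ = h x := by rw [hhdef]; dsimp only; rw [mul_div_assoc]
    have hconst_mul : (∫ z in (1/2:ℝ)..θ₁, (1/2 : ℝ) * (f z / (1 - F z)))
        = (1/2) * ∫ z in (1/2:ℝ)..θ₁, f z / (1 - F z) :=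
      intervalIntegral.integral_const_mul _ _
    have hsplit : bW θ₁ = bW (1/2) + ∫ z in (1/2:ℝ)..θ₁, h z := by
      rw [hbW θ₁, hbW (1/2)]
      rw [intervalIntegral.integral_add_adjacent_intervals
        (hh_ii 0 (1/2) le_rfl (by norm_num) (by norm_num))
        (hh_ii (1/2) θ₁ (by norm_num) hθ₁half hθ₁lt)]
    have hbWhalf : 0 ≤ bW (1/2) := by
      rw [hbW]
      apply intervalIntegral.integral_nonneg (by norm_num)
      intro u hu
      exact hhnn u ⟨hu.1, lt_of_le_of_lt hu.2 (by norm_num)⟩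
    have hge : (2:ℝ) ≤ bW θ₁ := by
      have h2 : (1/2:ℝ) * ((-Real.log (1 - F θ₁)) - (-Real.log (1 - F (1/2)))) ≥ 2 := by
        have hcc : Real.log (1 - F (1/2)) = Real.log c := rfl
        linarith [hlog, hcc]
      rw [hsplit]
      rw [hconst_mul, hint_eq] at hmono_int
      linarith
    show 0 < bW θ₁ - θ₁
    linarith
  -- the crossing point
  have hδθ₁ : δ ≤ θ₁ := le_trans hδhalf hθ₁half
  set S : Set ℝ := {θ ∈ Set.Icc δ θ₁ | g θ ≤ 0} with hSdef
  have hSne : S.Nonempty := ⟨δ, ⟨Set.left_mem_Icc.2 hδθ₁, hgδ.le⟩⟩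
  have hgcont : ContinuousOn g (Set.Icc 0 θ₁) :=
    (hbWcont θ₁ hθ₁pos.le hθ₁lt).sub continuousOn_id
  have hIccsub : Set.Icc δ θ₁ ⊆ Set.Icc (0:ℝ) θ₁ := Set.Icc_subset_Icc_left hδpos.le
  have hScl : IsClosed S := by
    have h1 : ContinuousOn g (Set.Icc δ θ₁) := hgcont.mono hIccsub
    have := h1.preimage_isClosed_of_isClosed isClosed_Icc (isClosed_Iic (a := (0:ℝ)))
    exact this
  have hSsub : S ⊆ Set.Icc δ θ₁ := fun x hx => hx.1
  have hScomp : IsCompact S := isCompact_Icc.of_isClosed_subset hScl hSsub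
  set θs := sSup S with hθsdef
  have hθsS : θs ∈ S := hScomp.sSup_mem hSne
  have hgθs_le : g θs ≤ 0 := hθsS.2
  have hθs_mem : θs ∈ Set.Icc δ θ₁ := hθsS.1
  have hθs_lt : θs < θ₁ := lt_of_le_of_ne hθs_mem.2 (by
    intro e; rw [e] at hgθs_le; linarith)
  have hθs_pos : 0 < θs := lt_of_lt_of_le hδpos hθs_mem.1
  have hθs1 : θs < 1 := lt_trans hθs_lt hθ₁lt
  have hub : ∀ x ∈ S, x ≤ θs := fun x hx => le_csSup hScomp.bddAbove hx
  have hgθs : g θs = 0 := by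
    rcases lt_or_eq_of_le hgθs_le with h' | h'
    · exfalso
      have hcw : ContinuousWithinAt g (Set.Ioc θs θ₁) θs := by
        refine (hgcont.continuousWithinAt ⟨hθs_pos.le, hθs_mem.2⟩).mono ?_
        intro x hx; exact ⟨le_trans hθs_pos.le hx.1.le, hx.2⟩
      have hnb : (nhdsWithin θs (Set.Ioc θs θ₁)).NeBot := by
        rw [← mem_closure_iff_nhdsWithin_neBot, closure_Ioc (ne_of_lt hθs_lt)]
        exact Set.left_mem_Icc.2 hθs_lt.le
      have hev : ∀ᶠ x in nhdsWithin θs (Set.Ioc θs θ₁), g x < 0 :=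
        hcw.eventually (eventually_lt_nhds h')
      obtain ⟨x, hx1, hx2⟩ := (hev.and self_mem_nhdsWithin).exists
      have hxS : x ∈ S := ⟨⟨le_trans hθs_mem.1 hx2.1.le, hx2.2⟩, hx1.le⟩
      exact absurd (hub x hxS) (not_le.2 hx2.1)
    · exact h'
  have hδlt : δ < θs := lt_of_le_of_ne hθs_mem.1 (by
    intro e; rw [← e] at hgθs; linarith)
  refine ⟨θs, ⟨hθs_pos, hθs1⟩, ?_, ?_⟩
  · -- bW θ ≤ θ on [0, θs]
    intro θ hθ
    have hconvθ₁ := hconv θ₁ hθ₁pos hθ₁lt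
    set t := θ / θs with htdef
    have ht0 : 0 ≤ t := div_nonneg hθ.1 hθs_pos.le
    have ht1 : t ≤ 1 := (div_le_one hθs_pos).2 hθ.2
    have h0mem : (0:ℝ) ∈ Set.Icc (0:ℝ) θ₁ := ⟨le_rfl, hθ₁pos.le⟩
    have hθsmem' : θs ∈ Set.Icc (0:ℝ) θ₁ := ⟨hθs_pos.le, hθs_mem.2⟩
    have hcx := hconvθ₁.2 h0mem hθsmem' (by linarith : (0:ℝ) ≤ 1 - t) ht0 (by ring)
    have heq : (1 - t) • (0:ℝ) + t • θs = θ := by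
      simp only [smul_eq_mul, mul_zero, zero_add, htdef]
      field_simp
    rw [heq] at hcx
    have hfin : g θ ≤ (1 - t) * g 0 + t * g θs := hcx
    rw [hg0, hgθs] at hfin
    have hle : g θ ≤ 0 := by simpa using hfin
    have : bW θ - θ ≤ 0 := hle
    linarith
  · -- θ ≤ bW θ on [θs, 1)
    intro θ hθ
    rcases eq_or_lt_of_le hθ.1 with he | hlt
    · have h0 : g θ = 0 := by rw [← he]; exact hgθs
      have : bW θ - θ = 0 := h0
      linarith
    · have hθ1 : θ < 1 := hθ.2
      have hθpos : 0 < θ := lt_trans hθs_pos hlt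
      have hconvθ := hconv θ hθpos hθ1
      set t := (θs - δ) / (θ - δ) with htdef
      have hd : 0 < θ - δ := by linarith
      have ht0 : 0 < t := div_pos (by linarith) hd
      have ht1 : t < 1 := (div_lt_one hd).2 (by linarith)
      have hδmem : δ ∈ Set.Icc (0:ℝ) θ := ⟨hδpos.le, by linarith⟩
      have hθmem : θ ∈ Set.Icc (0:ℝ) θ := ⟨hθpos.le, le_rfl⟩
      have hcx := hconvθ.2 hδmem hθmem (by linarith : (0:ℝ) ≤ 1 - t) ht0.le (by ring)
      have hteq : t * (θ - δ) = θs - δ := div_mul_cancel₀ _ (ne_of_gt hd)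
      have heq : (1 - t) • δ + t • θ = θs := by
        simp only [smul_eq_mul]
        calc (1 - t) * δ + t * θ = δ + t * (θ - δ) := by ring
          _ = δ + (θs - δ) := by rw [hteq]
          _ = θs := by ring
      rw [heq] at hcx
      have hfin : g θs ≤ (1 - t) * g δ + t * g θ := hcx
      rw [hgθs] at hfin
      have h1 : (1 - t) * g δ < 0 := mul_neg_of_pos_of_neg (by linarith) hgδ
      have h2 : 0 < t * g θ := by linarith
      have h3 : 0 < g θ := by
        by_contra hcon
        push_neg at hcon
        nlinarith
      have : 0 < bW θ - θ := h3
      linarith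

end
end

section
/- Let f : [0,1]×[0,1] → (0,∞), written f(z|θ), be such that z ↦ f(z|θ) is continuous for each θ and θ ↦ f(z|θ) is differentiable for each z. Set F(z|θ) := ∫₀^z f(w|θ) dw, assume F(z|θ) < 1 for all z, θ, assume θ ↦ F(z|θ) is differentiable with ∂_θ F(z|θ) = ∫₀^z ∂_θ f(w|θ) dw, and define the hazard rate λ(z|θ) := f(z|θ)/(1−F(z|θ)). If for every z the map θ ↦ λ(z|θ) is nonincreasing, then for all 0 ≤ z ≤ θ ≤ 1: ∂_θ f(z|θ) ≤ λ(z|z) · ∂_θ[1−F(z|θ)]. -/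
/-!
Differentiating the nonincreasing hazard rate `θ ↦ f(z|θ) / (1 - F(z|θ))` gives
`∂_θ f(z|θ) ≤ λ(z|θ) · ∂_θ[1 - F(z|θ)]`. The hazard-rate order also implies first-order
stochastic dominance: for `θ₁ ≤ θ₂` the survival ratio `(1 - F(·|θ₂)) / (1 - F(·|θ₁))` has
nonnegative derivative and equals `1` at `0`, so `F(z|·)` is nonincreasing and
`∂_θ[1 - F(z|θ)] ≥ 0`. Hence `λ(z|θ)` may be replaced by the larger `λ(z|z)` when `z ≤ θ`.
-/

open MeasureTheory Set Filter

theorem HasDerivAt.le_div_mul_of_antitoneOn_div {g S : ℝ → ℝ} {g' S' x : ℝ} {s : Set ℝ}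
    (hg : HasDerivAt g g' x) (hS : HasDerivAt S S' x) (hSx : 0 < S x)
    (hanti : AntitoneOn (fun t => g t / S t) s) (hx : AccPt x (𝓟 s)) :
    g' ≤ g x / S x * S' := by
  have hquot := ((hg.div hS hSx.ne').hasDerivWithinAt (s := s)).nonpos_of_antitoneOn hx hanti
  rw [div_le_iff₀ (by positivity), zero_mul, sub_nonpos] at hquot
  rwa [div_mul_eq_mul_div, le_div_iff₀ hSx]

theorem monotoneOn_div_of_logDeriv_le {S₁ S₂ d₁ d₂ : ℝ → ℝ} {a b : ℝ}
    (hS₁ : ContinuousOn S₁ (Icc a b)) (hS₂ : ContinuousOn S₂ (Icc a b))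
    (hd₁ : ∀ x ∈ Ioo a b, HasDerivAt S₁ (d₁ x) x) (hd₂ : ∀ x ∈ Ioo a b, HasDerivAt S₂ (d₂ x) x)
    (hpos₁ : ∀ x ∈ Icc a b, 0 < S₁ x) (hpos₂ : ∀ x ∈ Ioo a b, 0 < S₂ x)
    (hle : ∀ x ∈ Ioo a b, d₁ x / S₁ x ≤ d₂ x / S₂ x) :
    MonotoneOn (fun x => S₂ x / S₁ x) (Icc a b) := by
  have hne : ∀ x ∈ Icc a b, S₁ x ≠ 0 := fun x hx => (hpos₁ x hx).ne'
  refine monotoneOn_of_hasDerivWithinAt_nonneg (convex_Icc a b)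
    (f' := fun x => (d₂ x * S₁ x - S₂ x * d₁ x) / S₁ x ^ 2) (hS₂.div hS₁ hne)
    (fun x hx => ?_) (fun x hx => ?_)
  · rw [interior_Icc] at hx
    exact ((hd₂ x hx).div (hd₁ x hx) (hne x (Ioo_subset_Icc_self hx))).hasDerivWithinAt
  · rw [interior_Icc] at hx
    have h₁ := hpos₁ x (Ioo_subset_Icc_self hx)
    have h₂ := hpos₂ x hx
    have hcross := hle x hx
    rw [div_le_div_iff₀ h₁ h₂] at hcross
    exact div_nonneg (by linarith) (sq_nonneg _)

theorem ContinuousOn.hasDerivAt_of_eqOn_integral {g G : ℝ → ℝ} {a b x : ℝ}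
    (hg : ContinuousOn g (Icc a b)) (hG : EqOn G (fun u => ∫ t in a..u, g t) (Icc a b))
    (hx : x ∈ Ioo a b) : HasDerivAt G (g x) x := by
  have hint : IntervalIntegrable g volume a x :=
    (hg.mono (by rw [uIcc_of_le hx.1.le]; exact Icc_subset_Icc_right hx.2.le)).intervalIntegrable
  have hderiv := intervalIntegral.integral_hasDerivAt_right hint
    ((hg.mono Ioo_subset_Icc_self).stronglyMeasurableAtFilter isOpen_Ioo x hx)
    (hg.continuousAt (Icc_mem_nhds hx.1 hx.2))
  exact hderiv.congr_of_eventuallyEq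
    (eventuallyEq_of_mem (Icc_mem_nhds hx.1 hx.2) hG)

theorem ContinuousOn.continuousOn_of_eqOn_integral {g G : ℝ → ℝ} {a b : ℝ} (hab : a ≤ b)
    (hg : ContinuousOn g (Icc a b)) (hG : EqOn G (fun u => ∫ t in a..u, g t) (Icc a b)) :
    ContinuousOn G (Icc a b) := by
  have hprim := intervalIntegral.continuousOn_primitive_interval (μ := volume)
    (a := a) (b := b) (f := g) (by rw [uIcc_of_le hab]; exact hg.integrableOn_Icc)
  rw [uIcc_of_le hab] at hprim
  exact hprim.congr hG

theorem antitoneOn_cdf_of_antitoneOn_hazard {f F : ℝ → ℝ → ℝ} {a b : ℝ} {s : Set ℝ}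
    (hf_cont : ∀ θ ∈ s, ContinuousOn (fun z => f z θ) (Icc a b))
    (hF : ∀ z ∈ Icc a b, ∀ θ ∈ s, F z θ = ∫ w in a..z, f w θ)
    (hFlt : ∀ z ∈ Icc a b, ∀ θ ∈ s, F z θ < 1)
    (hlam : ∀ z ∈ Icc a b, AntitoneOn (fun θ => f z θ / (1 - F z θ)) s)
    {z : ℝ} (hz : z ∈ Icc a b) : AntitoneOn (fun θ => F z θ) s := by
  intro t₁ ht₁ t₂ ht₂ ht
  have hsub : Icc a z ⊆ Icc a b := Icc_subset_Icc_right hz.2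
  have hprim : ∀ θ ∈ s, EqOn (fun w => F w θ) (fun u => ∫ w in a..u, f w θ) (Icc a z) :=
    fun θ hθ w hw => hF w (hsub hw) θ hθ
  have hcont : ∀ θ ∈ s, ContinuousOn (fun w => 1 - F w θ) (Icc a z) := fun θ hθ =>
    continuousOn_const.sub
      (((hf_cont θ hθ).mono hsub).continuousOn_of_eqOn_integral hz.1 (hprim θ hθ))
  have hderiv : ∀ θ ∈ s, ∀ w ∈ Ioo a z, HasDerivAt (fun w => 1 - F w θ) (-f w θ) w :=
    fun θ hθ w hw =>
      (((hf_cont θ hθ).mono hsub).hasDerivAt_of_eqOn_integral (hprim θ hθ) hw).const_sub 1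
  have hpos : ∀ θ ∈ s, ∀ w ∈ Icc a z, 0 < 1 - F w θ := fun θ hθ w hw =>
    sub_pos.mpr (hFlt w (hsub hw) θ hθ)
  have hratio := monotoneOn_div_of_logDeriv_le (hcont t₁ ht₁) (hcont t₂ ht₂)
    (hderiv t₁ ht₁) (hderiv t₂ ht₂) (hpos t₁ ht₁) (fun w hw => hpos t₂ ht₂ w (Ioo_subset_Icc_self hw))
    (fun w hw => by
      simp only [neg_div, neg_le_neg_iff]
      exact hlam w (hsub (Ioo_subset_Icc_self hw)) ht₁ ht₂ ht)
    (left_mem_Icc.mpr hz.1) (right_mem_Icc.mpr hz.1) hz.1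
  have hF₀ : ∀ θ ∈ s, F a θ = 0 := fun θ hθ => by
    rw [hF a (left_mem_Icc.mpr (hz.1.trans hz.2)) θ hθ, intervalIntegral.integral_same]
  simp only [hF₀ t₁ ht₁, hF₀ t₂ ht₂, sub_zero, div_one] at hratio
  rw [one_le_div (hpos t₁ ht₁ z (right_mem_Icc.mpr hz.1))] at hratio
  linarith

theorem stmt18_general
    -- f z θ stands for the conditional density f(z|θ)
    (f : ℝ → ℝ → ℝ)
    (hf_cont : ∀ θ ∈ Set.Icc (0:ℝ) 1, ContinuousOn (fun z => f z θ) (Set.Icc 0 1))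
    -- df z θ is the partial derivative ∂_θ f(z|θ)
    (df : ℝ → ℝ → ℝ)
    (hdf : ∀ z ∈ Set.Icc (0:ℝ) 1, ∀ θ ∈ Set.Icc (0:ℝ) 1,
      HasDerivAt (fun t => f z t) (df z θ) θ)
    -- F z θ is the conditional cdf F(z|θ)
    (F : ℝ → ℝ → ℝ)
    (hF : ∀ z ∈ Set.Icc (0:ℝ) 1, ∀ θ ∈ Set.Icc (0:ℝ) 1,
      F z θ = ∫ w in (0:ℝ)..z, f w θ)
    (hFlt : ∀ z ∈ Set.Icc (0:ℝ) 1, ∀ θ ∈ Set.Icc (0:ℝ) 1, F z θ < 1)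
    -- ∂_θ F(z|θ) exists and equals ∫₀^z ∂_θ f(w|θ) dw
    (hdF : ∀ z ∈ Set.Icc (0:ℝ) 1, ∀ θ ∈ Set.Icc (0:ℝ) 1,
      HasDerivAt (fun t => F z t) (∫ w in (0:ℝ)..z, df w θ) θ)
    -- the hazard rate λ(z|θ) = f(z|θ)/(1−F(z|θ)) is nonincreasing in θ
    (hlam : ∀ z ∈ Set.Icc (0:ℝ) 1,
      AntitoneOn (fun θ => f z θ / (1 - F z θ)) (Set.Icc 0 1)) :
    ∀ z θ : ℝ, 0 ≤ z → z ≤ θ → θ ≤ 1 →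
      df z θ ≤ (f z z / (1 - F z z)) * (-(∫ w in (0:ℝ)..z, df w θ)) := by
  intro z θ hz₀ hzθ hθ₁
  have hz : z ∈ Icc (0:ℝ) 1 := ⟨hz₀, hzθ.trans hθ₁⟩
  have hθ : θ ∈ Icc (0:ℝ) 1 := ⟨hz₀.trans hzθ, hθ₁⟩
  have hacc : AccPt θ (𝓟 (Icc (0:ℝ) 1)) := (uniqueDiffOn_Icc zero_lt_one θ hθ).accPt
  have hdF_nonpos : ∫ w in (0:ℝ)..z, df w θ ≤ 0 :=
    (hdF z hz θ hθ).hasDerivWithinAt.nonpos_of_antitoneOn hacc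
      (antitoneOn_cdf_of_antitoneOn_hazard hf_cont hF hFlt hlam hz)
  calc df z θ ≤ f z θ / (1 - F z θ) * -∫ w in (0:ℝ)..z, df w θ :=
        (hdf z hz θ hθ).le_div_mul_of_antitoneOn_div ((hdF z hz θ hθ).const_sub 1)
          (sub_pos.mpr (hFlt z hz θ hθ)) (hlam z hz) hacc
    _ ≤ f z z / (1 - F z z) * -∫ w in (0:ℝ)..z, df w θ :=
        mul_le_mul_of_nonneg_right (hlam z hz hz hθ hzθ) (neg_nonneg.mpr hdF_nonpos)

theorem stmt18
    -- f z θ stands for the conditional density f(z|θ)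
    (f : ℝ → ℝ → ℝ)
    (hf_pos : ∀ z ∈ Set.Icc (0:ℝ) 1, ∀ θ ∈ Set.Icc (0:ℝ) 1, 0 < f z θ)
    (hf_cont : ∀ θ ∈ Set.Icc (0:ℝ) 1, ContinuousOn (fun z => f z θ) (Set.Icc 0 1))
    -- df z θ is the partial derivative ∂_θ f(z|θ)
    (df : ℝ → ℝ → ℝ)
    (hdf : ∀ z ∈ Set.Icc (0:ℝ) 1, ∀ θ ∈ Set.Icc (0:ℝ) 1,
      HasDerivAt (fun t => f z t) (df z θ) θ)
    -- F z θ is the conditional cdf F(z|θ)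
    (F : ℝ → ℝ → ℝ)
    (hF : ∀ z ∈ Set.Icc (0:ℝ) 1, ∀ θ ∈ Set.Icc (0:ℝ) 1,
      F z θ = ∫ w in (0:ℝ)..z, f w θ)
    (hFlt : ∀ z ∈ Set.Icc (0:ℝ) 1, ∀ θ ∈ Set.Icc (0:ℝ) 1, F z θ < 1)
    -- ∂_θ F(z|θ) exists and equals ∫₀^z ∂_θ f(w|θ) dw
    (hdF : ∀ z ∈ Set.Icc (0:ℝ) 1, ∀ θ ∈ Set.Icc (0:ℝ) 1,
      HasDerivAt (fun t => F z t) (∫ w in (0:ℝ)..z, df w θ) θ)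
    -- the hazard rate λ(z|θ) = f(z|θ)/(1−F(z|θ)) is nonincreasing in θ
    (hlam : ∀ z ∈ Set.Icc (0:ℝ) 1,
      AntitoneOn (fun θ => f z θ / (1 - F z θ)) (Set.Icc 0 1)) :
    ∀ z θ : ℝ, 0 ≤ z → z ≤ θ → θ ≤ 1 →
      df z θ ≤ (f z z / (1 - F z z)) * (-(∫ w in (0:ℝ)..z, df w θ)) :=
  stmt18_general f hf_cont df hdf F hF hFlt hdF hlam
end
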